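/- arXiv:2505.24516 — 4 statements merged into one kernel-verified Lean document; each statement's English description precedes it below -/
import Mathlib

section
/- Let T > 0, ρ ∈ (0,1), q ∈ (1/ρ, ∞), and let g ∈ L^q(0,T;ℝ) with g(t) ≥ 0 for almost every t ∈ [0,T]. Set β := (ρq − 1)/(q − 1) ∈ (0,1) and q* := q/(q − 1), and define F₁(t) := J^ρ g(t) and F_{k+1}(t) := J^ρ (g · F_k)(t) for k ≥ 1. Then for every n ≥ 1 and every t ∈ [0,T], F_n(t) ≤ (‖g‖_{L^q(0,T)} / Γ(ρ))ⁿ · (Γ(β)ⁿ / (n β Γ(nβ)))^{1/q*} · t^{n(ρ − 1/q)}. -/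
/-!
Induct on `n` with the bound `Fₙ(t) ≤ Cₙ t^(nβ/q*)`, where
`Cₙ = (‖g‖_q / Γ(ρ))ⁿ (Γ(β)ⁿ / Γ(nβ+1))^(1/q*)`.
In `J^ρ (g Fₙ)(t)` Hölder's inequality with exponents `q*, q` splits off `‖g‖_q`; since
`(ρ - 1) q* = β - 1`, the remaining factor is the Beta integral
`∫₀ᵗ (t-s)^(β-1) s^(nβ) ds = B(nβ+1, β) t^((n+1)β)`, and
`Γ(β)ⁿ B(nβ+1, β) / Γ(nβ+1) = Γ(β)ⁿ⁺¹ / Γ((n+1)β+1)` closes the induction.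
The final form uses `Γ(nβ+1) = nβ Γ(nβ)` and `β / q* = ρ - 1/q`.
-/

open MeasureTheory Real Set

/-- The Riemann–Liouville fractional integral of order `α`:
`J^α g (t) = (1/Γ(α)) ∫₀ᵗ (t-s)^(α-1) g(s) ds`. -/
noncomputable def rlInt {E : Type*} [NormedAddCommGroup E] [NormedSpace ℝ E]
    (α : ℝ) (g : ℝ → E) (t : ℝ) : E :=
  (Real.Gamma α)⁻¹ • ∫ s in (0:ℝ)..t, (t - s) ^ (α - 1) • g s

/-- The iterated Riemann–Liouville integrals: `iterJ ρ g 1 = J^ρ g` and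
`iterJ ρ g (k+1) = J^ρ (g · iterJ ρ g k)`. -/
noncomputable def iterJ (ρ : ℝ) (g : ℝ → ℝ) : ℕ → ℝ → ℝ
  | 0 => fun _ => 1
  | k + 1 => fun t => rlInt ρ (fun s => g s * iterJ ρ g k s) t

open ProbabilityTheory

theorem integral_rpow_mul_sub_rpow {a b t : ℝ} (ha : 0 < a) (hb : 0 < b) (ht : 0 < t) :
    ∫ s in (0:ℝ)..t, s ^ (a - 1) * (t - s) ^ (b - 1) = beta a b * t ^ (a + b - 1) := by
  apply Complex.ofReal_injective
  have hscaled := Complex.betaIntegral_scaled a b ht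
  rw [Complex.betaIntegral_eq_Gamma_mul_div _ _ (by simpa) (by simpa)] at hscaled
  rw [← intervalIntegral.integral_ofReal, beta]
  push_cast
  rw [← Complex.Gamma_ofReal, ← Complex.Gamma_ofReal, ← Complex.Gamma_ofReal,
    Complex.ofReal_cpow ht.le, mul_comm]
  push_cast
  rw [← hscaled]
  refine intervalIntegral.integral_congr fun s hs => ?_
  rw [uIcc_of_le ht.le] at hs
  rw [Complex.ofReal_cpow hs.1, Complex.ofReal_cpow (sub_nonneg.2 hs.2)]
  push_cast
  ring

theorem integrableOn_rpow_mul_sub_rpow {a b t : ℝ} (ha : 0 < a) (hb : 0 < b) (ht : 0 < t) :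
    IntegrableOn (fun s => s ^ (a - 1) * (t - s) ^ (b - 1)) (Ioc 0 t) := by
  have hpos : 0 < ∫ s in (0:ℝ)..t, s ^ (a - 1) * (t - s) ^ (b - 1) := by
    rw [integral_rpow_mul_sub_rpow ha hb ht]
    exact mul_pos (beta_pos ha hb) (rpow_pos_of_pos ht _)
  exact (intervalIntegrable_iff_integrableOn_Ioc_of_le ht.le).1
    (intervalIntegral.intervalIntegrable_of_integral_ne_zero hpos.ne')

section Kernel

variable {ρ β qs a t : ℝ}

theorem norm_kernel_rpow (hqs : 0 < qs) (hβ : (ρ - 1) * qs = β - 1) {s : ℝ}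
    (hs : s ∈ Ioc 0 t) :
    ‖(t - s) ^ (ρ - 1) * s ^ (a / qs)‖ ^ qs = s ^ (a + 1 - 1) * (t - s) ^ (β - 1) := by
  have hts : 0 ≤ t - s := sub_nonneg.2 hs.2
  have hk := rpow_nonneg hts (ρ - 1)
  have hw := rpow_nonneg hs.1.le (a / qs)
  rw [norm_of_nonneg (mul_nonneg hk hw), mul_rpow hk hw,
    ← rpow_mul hts, ← rpow_mul hs.1.le, hβ, div_mul_cancel₀ _ hqs.ne', add_sub_cancel_right,
    mul_comm]

theorem memLp_kernel (hqs : 0 < qs) (hβ : (ρ - 1) * qs = β - 1) (hβ0 : 0 < β) (ha : 0 < a + 1)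
    (ht : 0 < t) :
    MemLp (fun s => (t - s) ^ (ρ - 1) * s ^ (a / qs)) (ENNReal.ofReal qs)
      (volume.restrict (Ioc 0 t)) := by
  rw [← integrable_norm_rpow_iff (by fun_prop) (by simpa) ENNReal.ofReal_ne_top,
    ENNReal.toReal_ofReal hqs.le]
  exact (integrableOn_rpow_mul_sub_rpow ha hβ0 ht).congr_fun
    (fun s hs => (norm_kernel_rpow hqs hβ hs).symm) measurableSet_Ioc

theorem integral_norm_kernel_rpow (hqs : 0 < qs) (hβ : (ρ - 1) * qs = β - 1) (hβ0 : 0 < β)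
    (ha : 0 < a + 1) (ht : 0 < t) :
    ∫ s in Ioc 0 t, ‖(t - s) ^ (ρ - 1) * s ^ (a / qs)‖ ^ qs =
      beta (a + 1) β * t ^ (a + β) := by
  rw [setIntegral_congr_fun measurableSet_Ioc fun s hs => norm_kernel_rpow hqs hβ hs,
    ← intervalIntegral.integral_of_le ht.le, integral_rpow_mul_sub_rpow ha hβ0 ht]
  ring_nf

theorem rlInt_mul_le {q C : ℝ} {g F : ℝ → ℝ} (hρ : 0 < ρ) (hconj : qs.HolderConjugate q)
    (hβ : (ρ - 1) * qs = β - 1) (hβ0 : 0 < β) (ha : 0 < a + 1) (ht : 0 < t) (hC : 0 ≤ C)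
    (hg : MemLp g (ENNReal.ofReal q) (volume.restrict (Ioc 0 t)))
    (hg0 : ∀ᵐ s ∂volume.restrict (Ioc 0 t), 0 ≤ g s)
    (hF : ∀ s ∈ Ioc 0 t, F s ≤ C * s ^ (a / qs)) :
    rlInt ρ (fun s => g s * F s) t ≤
      (Gamma ρ)⁻¹ * C * beta (a + 1) β ^ (1 / qs) * t ^ ((a + β) / qs) *
        (eLpNorm g (ENNReal.ofReal q) (volume.restrict (Ioc 0 t))).toReal := by
  set μ := volume.restrict (Ioc 0 t)
  set φ := fun s => (t - s) ^ (ρ - 1) * s ^ (a / qs)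
  have hφ : MemLp φ (ENNReal.ofReal qs) μ := memLp_kernel hconj.pos hβ hβ0 ha ht
  have := hconj.ennrealOfReal
  have hdom : Integrable (fun s => C * (‖φ s‖ * ‖g s‖)) μ :=
    (hφ.norm.integrable_mul hg.norm).const_mul C
  have hle : ∀ᵐ s ∂μ, (t - s) ^ (ρ - 1) * (g s * F s) ≤ C * (‖φ s‖ * ‖g s‖) := by
    filter_upwards [hg0, ae_restrict_mem measurableSet_Ioc] with s hgs hs
    have hk : 0 ≤ (t - s) ^ (ρ - 1) := rpow_nonneg (sub_nonneg.2 hs.2) _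
    rw [norm_of_nonneg hgs, norm_of_nonneg (mul_nonneg hk (rpow_nonneg hs.1.le _))]
    calc (t - s) ^ (ρ - 1) * (g s * F s)
        ≤ (t - s) ^ (ρ - 1) * (g s * (C * s ^ (a / qs))) := by gcongr; exact hF s hs
      _ = C * ((t - s) ^ (ρ - 1) * s ^ (a / qs) * g s) := by ring
  -- a non-integrable left side has integral `0`
  have hmono : ∫ s in Ioc 0 t, (t - s) ^ (ρ - 1) * (g s * F s) ≤
      ∫ s in Ioc 0 t, C * (‖φ s‖ * ‖g s‖) := by
    by_cases hi : Integrable (fun s => (t - s) ^ (ρ - 1) * (g s * F s)) μ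
    · exact integral_mono_ae hi hdom hle
    · rw [integral_undef hi]
      exact integral_nonneg fun s => by positivity
  have hgq :
      (eLpNorm g (ENNReal.ofReal q) μ).toReal = (∫ s in Ioc 0 t, ‖g s‖ ^ q) ^ (1 / q) := by
    rw [hg.eLpNorm_eq_integral_rpow_norm (by simpa using hconj.symm.pos) ENNReal.ofReal_ne_top,
      ENNReal.toReal_ofReal hconj.symm.nonneg, one_div, ENNReal.toReal_ofReal (by positivity)]
  have hφq : (∫ s in Ioc 0 t, ‖φ s‖ ^ qs) ^ (1 / qs) =
      beta (a + 1) β ^ (1 / qs) * t ^ ((a + β) / qs) := by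
    rw [integral_norm_kernel_rpow hconj.pos hβ hβ0 ha ht,
      mul_rpow (beta_pos ha hβ0).le (rpow_nonneg ht.le _), ← rpow_mul ht.le, mul_one_div]
  calc rlInt ρ (fun s => g s * F s) t
      = (Gamma ρ)⁻¹ * ∫ s in Ioc 0 t, (t - s) ^ (ρ - 1) * (g s * F s) := by
        rw [rlInt, smul_eq_mul, intervalIntegral.integral_of_le ht.le]; rfl
    _ ≤ (Gamma ρ)⁻¹ * (C * ∫ s in Ioc 0 t, ‖φ s‖ * ‖g s‖) := by
        rw [← integral_const_mul C]
        exact mul_le_mul_of_nonneg_left hmono (inv_nonneg.2 (Gamma_pos_of_pos hρ).le)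
    _ ≤ (Gamma ρ)⁻¹ * (C * ((∫ s in Ioc 0 t, ‖φ s‖ ^ qs) ^ (1 / qs) *
          (∫ s in Ioc 0 t, ‖g s‖ ^ q) ^ (1 / q))) := by
        have := (Gamma_pos_of_pos hρ).le
        gcongr
        exact integral_mul_norm_le_Lp_mul_Lq hconj hφ hg
    _ = _ := by rw [hφq, hgq]; ring

end Kernel

theorem Gamma_pow_div_mul_beta {β x : ℝ} (hβ : 0 < β) (hx : 0 < x) (n : ℕ) :
    Gamma β ^ n / Gamma x * beta x β = Gamma β ^ (n + 1) / Gamma (x + β) := by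
  have := (Gamma_pos_of_pos hx).ne'
  rw [beta]
  field_simp
  ring

theorem iterJ_le {T ρ q qs β : ℝ} {g : ℝ → ℝ} (hρ : 0 < ρ) (hconj : qs.HolderConjugate q)
    (hβ : (ρ - 1) * qs = β - 1) (hβ0 : 0 < β)
    (hg : MemLp g (ENNReal.ofReal q) (volume.restrict (Icc 0 T)))
    (hg0 : ∀ᵐ t ∂volume.restrict (Icc 0 T), 0 ≤ g t) (n : ℕ) {t : ℝ} (ht : t ∈ Icc 0 T) :
    iterJ ρ g n t ≤
      ((eLpNorm g (ENNReal.ofReal q) (volume.restrict (Icc 0 T))).toReal / Gamma ρ) ^ n *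
        (Gamma β ^ n / Gamma (n * β + 1)) ^ (1 / qs) * t ^ (n * β / qs) := by
  set M := (eLpNorm g (ENNReal.ofReal q) (volume.restrict (Icc 0 T))).toReal
  induction n generalizing t with
  | zero => simp [iterJ]
  | succ n ih =>
    rcases ht.1.eq_or_lt with rfl | ht0
    · simp only [iterJ, rlInt, intervalIntegral.integral_same, smul_zero]
      positivity
    have hsub : Ioc 0 t ⊆ Icc 0 T := fun s hs => ⟨hs.1.le, hs.2.trans ht.2⟩
    have hMt : (eLpNorm g (ENNReal.ofReal q) (volume.restrict (Ioc 0 t))).toReal ≤ M :=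
      ENNReal.toReal_mono hg.eLpNorm_ne_top
        (eLpNorm_mono_measure _ (Measure.restrict_mono hsub le_rfl))
    have hstep := rlInt_mul_le (a := n * β) (F := iterJ ρ g n) hρ hconj hβ hβ0 (by positivity)
      ht0 (by positivity) (hg.mono_measure (Measure.restrict_mono hsub le_rfl))
      (ae_restrict_of_ae_restrict_of_subset hsub hg0)
      (fun s hs => ih ⟨hs.1.le, hs.2.trans ht.2⟩)
    have hB := beta_pos (show 0 < n * β + 1 by positivity) hβ0
    refine (hstep.trans (mul_le_mul_of_nonneg_left hMt (by positivity))).trans_eq ?_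
    rw [show ((n + 1 : ℕ) : ℝ) * β + 1 = n * β + 1 + β by push_cast; ring,
      ← Gamma_pow_div_mul_beta hβ0 (by positivity) n, mul_rpow (by positivity) hB.le]
    push_cast
    ring_nf

theorem iterated_rlInt_bound_general
    (T : ℝ) (ρ : ℝ) (hρ : ρ ∈ Ioo (0:ℝ) 1)
    (q : ℝ) (hq : 1 / ρ < q)
    (g : ℝ → ℝ) (hg : MemLp g (ENNReal.ofReal q) (volume.restrict (Icc (0:ℝ) T)))
    (hg0 : ∀ᵐ t ∂(volume.restrict (Icc (0:ℝ) T)), 0 ≤ g t)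
    (β qs : ℝ) (hβ : β = (ρ * q - 1) / (q - 1)) (hqs : qs = q / (q - 1)) :
    ∀ n : ℕ, 1 ≤ n → ∀ t ∈ Icc (0:ℝ) T,
      iterJ ρ g n t ≤
        ((eLpNorm g (ENNReal.ofReal q) (volume.restrict (Icc (0:ℝ) T))).toReal /
            Real.Gamma ρ) ^ n *
          (Real.Gamma β ^ n / ((n : ℝ) * β * Real.Gamma ((n : ℝ) * β))) ^ (1 / qs) *
          t ^ ((n : ℝ) * (ρ - 1 / q)) := by
  intro n hn t ht
  obtain ⟨hρ0, hρ1⟩ := hρ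
  have hq1 : 1 < q := (one_lt_one_div hρ0 hρ1).trans hq
  have hρq : 1 < ρ * q := by rwa [div_lt_iff₀ hρ0, mul_comm] at hq
  have hconj : qs.HolderConjugate q := hqs ▸ (Real.HolderConjugate.conjExponent hq1).symm
  have hβ0 : 0 < β := hβ ▸ div_pos (by linarith) (by linarith)
  have hβqs : (ρ - 1) * qs = β - 1 := by
    rw [hβ, hqs]; field_simp [(sub_pos.2 hq1).ne']; ring
  have hexp : n * β / qs = n * (ρ - 1 / q) := by
    rw [hβ, hqs]; field_simp [(sub_pos.2 hq1).ne']
  have hΓ : Gamma (n * β + 1) = n * β * Gamma (n * β) :=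
    Gamma_add_one (by positivity)
  simpa only [hΓ, hexp] using iterJ_le hρ0 hconj hβqs hβ0 hg hg0 n ht

/-- Explicit bound for the iterated Riemann–Liouville integrals: with
`β = (ρq - 1)/(q - 1)` and `q* = q/(q - 1)`, for every `n ≥ 1` and `t ∈ [0,T]`,
`Fₙ(t) ≤ (‖g‖_{L^q}/Γ(ρ))ⁿ (Γ(β)ⁿ/(nβΓ(nβ)))^{1/q*} t^{n(ρ - 1/q)}`. -/
theorem iterated_rlInt_bound
    (T : ℝ) (hT : 0 < T) (ρ : ℝ) (hρ : ρ ∈ Ioo (0:ℝ) 1)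
    (q : ℝ) (hq : 1 / ρ < q)
    (g : ℝ → ℝ) (hg : MemLp g (ENNReal.ofReal q) (volume.restrict (Icc (0:ℝ) T)))
    (hg0 : ∀ᵐ t ∂(volume.restrict (Icc (0:ℝ) T)), 0 ≤ g t)
    (β qs : ℝ) (hβ : β = (ρ * q - 1) / (q - 1)) (hqs : qs = q / (q - 1)) :
    ∀ n : ℕ, 1 ≤ n → ∀ t ∈ Icc (0:ℝ) T,
      iterJ ρ g n t ≤
        ((eLpNorm g (ENNReal.ofReal q) (volume.restrict (Icc (0:ℝ) T))).toReal /
            Real.Gamma ρ) ^ n *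
          (Real.Gamma β ^ n / ((n : ℝ) * β * Real.Gamma ((n : ℝ) * β))) ^ (1 / qs) *
          t ^ ((n : ℝ) * (ρ - 1 / q)) :=
  iterated_rlInt_bound_general T ρ hρ q hq g hg hg0 β qs hβ hqs
end

section
/- Let n ≥ 1, T > 0, α₁, …, αₙ ∈ (0,1], p > max{1/α_j : j ∈ {1,…,n}}, let f = (f₁,…,fₙ) : ℝⁿ × [0,T] → ℝⁿ be an L^p-Carathéodory function, and ξ ∈ ℝⁿ. Then for every continuous φ : [0,T] → ℝⁿ, each of the functions t ↦ ξ_j + (1/Γ(α_j)) ∫₀ᵗ (t−s)^{α_j−1} f_j(φ(s),s) ds, j ∈ {1,…,n}, is continuous on [0,T]; hence the operator T(φ)(t) := ξ + (J^{α_1} f₁(φ(·),·)(t), …, J^{α_n} f_n(φ(·),·)(t)) maps C([0,T];ℝⁿ) into itself. -/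
open MeasureTheory Real Set

/-- `f : ℝⁿ × [0,T] → ℝⁿ` is a Carathéodory function: `x ↦ f x t` is continuous for a.e.
`t ∈ [0,T]` and `t ↦ f x t` is Lebesgue measurable for every `x`. -/
def IsCaratheodory {n : ℕ} (T : ℝ)
    (f : EuclideanSpace ℝ (Fin n) → ℝ → EuclideanSpace ℝ (Fin n)) : Prop :=
  (∀ᵐ t ∂(volume.restrict (Icc (0:ℝ) T)), Continuous fun x => f x t) ∧
  ∀ x, Measurable fun t => f x t

/-- `f` is an `L^p`-Carathéodory function: Carathéodory, with an `L^p` growth bound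
`‖f(x,t)‖ ≤ C‖x‖ + γ(t)` and an `L^p` Lipschitz bound `‖f(x,t) - f(y,t)‖ ≤ ℓ(t)‖x - y‖`. -/
def IsLpCaratheodory {n : ℕ} (p T : ℝ)
    (f : EuclideanSpace ℝ (Fin n) → ℝ → EuclideanSpace ℝ (Fin n)) : Prop :=
  IsCaratheodory T f ∧
  (∃ C > (0:ℝ), ∃ γ : ℝ → ℝ, MemLp γ (ENNReal.ofReal p) (volume.restrict (Icc (0:ℝ) T)) ∧
    ∀ᵐ t ∂(volume.restrict (Icc (0:ℝ) T)), ∀ x, ‖f x t‖ ≤ C * ‖x‖ + γ t) ∧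
  (∃ ℓ : ℝ → ℝ, MemLp ℓ (ENNReal.ofReal p) (volume.restrict (Icc (0:ℝ) T)) ∧
    ∀ᵐ t ∂(volume.restrict (Icc (0:ℝ) T)), ∀ x y, ‖f x t - f y t‖ ≤ ℓ t * ‖x - y‖)

/-- The operator `𝒯(φ)(t) = ξ + (J^{α_1} f₁(φ(·),·)(t), …, J^{α_n} f_n(φ(·),·)(t))`
associated to the fractional system. -/
noncomputable def caraOp {n : ℕ} (α : Fin n → ℝ)
    (f : EuclideanSpace ℝ (Fin n) → ℝ → EuclideanSpace ℝ (Fin n))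
    (ξ : EuclideanSpace ℝ (Fin n)) (φ : ℝ → EuclideanSpace ℝ (Fin n)) :
    ℝ → EuclideanSpace ℝ (Fin n) :=
  fun t => ξ + (show EuclideanSpace ℝ (Fin n) from WithLp.toLp 2 (fun j => rlInt (α j) (fun s => f (φ s) s j) t))

/-!
Put `β = α - 1`, let `q` be the conjugate exponent of `p` and `σ = β q + 1`, so that `σ > 0`
means `α p > 1`. For `J(t) = ∫₀ᵗ (t-s)^β g(s) ds` and `0 ≤ a ≤ b ≤ T`,
`J(b) - J(a) = ∫₀ᵃ ((b-s)^β - (a-s)^β) g(s) ds + ∫ₐᵇ (b-s)^β g(s) ds`, and Hölder's inequality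
bounds each piece by `‖g‖_p ((b-a)^σ / σ)^(1/q)` (the first one thanks to the superadditivity
of `x ↦ x^q`). So `J` is `σ/q`-Hölder on `[0,T]` for every `g ∈ L^p(0,T)`. The integrand
`s ↦ f(φ(s), s)` is in `L^p(0,T)`: redefined on a null set of times, `f` is jointly measurable,
and the growth bound applies because `φ` is bounded.
-/

open intervalIntegral

lemma rpow_sub_le_rpow_sub_rpow {x y q : ℝ} (hy : 0 ≤ y) (hyx : y ≤ x) (hq : 1 ≤ q) :
    (x - y) ^ q ≤ x ^ q - y ^ q := by
  have := Real.add_rpow_le_rpow_add (sub_nonneg.2 hyx) hy hq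
  rw [sub_add_cancel] at this
  linarith

lemma integral_sub_rpow {r : ℝ} (hr : -1 < r) (a b c : ℝ) :
    ∫ s in a..b, (c - s) ^ r = ((c - a) ^ (r + 1) - (c - b) ^ (r + 1)) / (r + 1) := by
  rw [integral_comp_sub_left (· ^ r) c, integral_rpow (Or.inl hr)]

lemma intervalIntegrable_sub_rpow {r : ℝ} (hr : -1 < r) (a b c : ℝ) :
    IntervalIntegrable (fun s => (c - s) ^ r) volume a b := by
  simpa using (intervalIntegrable_rpow' (a := c - a) (b := c - b) hr).comp_sub_left c

lemma norm_sub_rpow_rpow {β q c s : ℝ} (hs : s ≤ c) :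
    ‖(c - s) ^ β‖ ^ q = (c - s) ^ (β * q) := by
  rw [Real.norm_of_nonneg (rpow_nonneg (sub_nonneg.2 hs) _), ← rpow_mul (sub_nonneg.2 hs)]

lemma memLp_sub_rpow {β q : ℝ} (hq : 0 < q) (hβq : -1 < β * q) {a b c : ℝ} (hbc : b ≤ c) :
    MemLp (fun s => (c - s) ^ β) (ENNReal.ofReal q) (volume.restrict (Ioc a b)) := by
  have hmeas : Measurable fun s : ℝ => (c - s) ^ β :=
    (measurable_const.sub measurable_id).pow_const β
  refine (integrable_norm_rpow_iff hmeas.aestronglyMeasurable (by simpa using hq)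
    ENNReal.ofReal_ne_top).1 ?_
  rw [ENNReal.toReal_ofReal hq.le]
  refine ((intervalIntegrable_sub_rpow hβq a b c).1).congr_fun (fun s hs => ?_) measurableSet_Ioc
  exact (norm_sub_rpow_rpow (hs.2.trans hbc)).symm

lemma setIntegral_Ioc_norm_sub_rpow_rpow {β q : ℝ} (hσ : 0 < β * q + 1) {a b : ℝ}
    (hab : a ≤ b) :
    ∫ s in Ioc a b, ‖(b - s) ^ β‖ ^ q = (b - a) ^ (β * q + 1) / (β * q + 1) := by
  rw [setIntegral_congr_fun measurableSet_Ioc fun s hs => norm_sub_rpow_rpow hs.2,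
    ← integral_of_le hab, integral_sub_rpow (by linarith), sub_self, zero_rpow hσ.ne', sub_zero]

lemma setIntegral_Ioc_norm_sub_rpow_sub_le {β q : ℝ} (hβ : β ≤ 0) (hq : 1 ≤ q)
    (hσ : 0 < β * q + 1) {a b : ℝ} (ha : 0 ≤ a) (hab : a ≤ b) :
    ∫ s in Ioc 0 a, ‖(b - s) ^ β - (a - s) ^ β‖ ^ q
      ≤ (b - a) ^ (β * q + 1) / (β * q + 1) := by
  have hβq : -1 < β * q := by linarith
  have hpointwise : ∀ s ∈ Ioo 0 a,
      ‖(b - s) ^ β - (a - s) ^ β‖ ^ q ≤ (a - s) ^ (β * q) - (b - s) ^ (β * q) := by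
    intro s hs
    have has : 0 < a - s := sub_pos.2 hs.2
    have hmono : (b - s) ^ β ≤ (a - s) ^ β := rpow_le_rpow_of_nonpos has (by linarith) hβ
    rw [norm_sub_rev, Real.norm_of_nonneg (sub_nonneg.2 hmono), rpow_mul has.le,
      rpow_mul (by linarith : 0 ≤ b - s)]
    exact rpow_sub_le_rpow_sub_rpow (rpow_nonneg (by linarith) _) hmono hq
  have hint := (intervalIntegrable_sub_rpow hβq 0 a a).sub (intervalIntegrable_sub_rpow hβq 0 a b)
  calc ∫ s in Ioc 0 a, ‖(b - s) ^ β - (a - s) ^ β‖ ^ q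
      ≤ ∫ s in Ioo 0 a, ((a - s) ^ (β * q) - (b - s) ^ (β * q)) := by
        rw [integral_Ioc_eq_integral_Ioo]
        exact integral_mono_of_nonneg (.of_forall fun s => by positivity)
          (hint.1.mono_set Ioo_subset_Ioc_self)
          ((ae_restrict_iff' measurableSet_Ioo).2 (.of_forall hpointwise))
    _ = (a ^ (β * q + 1) - b ^ (β * q + 1) + (b - a) ^ (β * q + 1)) / (β * q + 1) := by
        rw [← integral_Ioc_eq_integral_Ioo, ← integral_of_le ha,
          integral_sub (intervalIntegrable_sub_rpow hβq 0 a a)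
            (intervalIntegrable_sub_rpow hβq 0 a b), integral_sub_rpow hβq,
          integral_sub_rpow hβq, sub_self, zero_rpow hσ.ne', sub_zero, sub_zero, sub_zero]
        ring
    _ ≤ (b - a) ^ (β * q + 1) / (β * q + 1) := by
        gcongr
        linarith [rpow_le_rpow ha hab hσ.le]

lemma norm_setIntegral_mul_le {α : Type*} [MeasurableSpace α] {μ : Measure α} {p q : ℝ}
    (hpq : p.HolderConjugate q) {S U : Set α} (hSU : S ⊆ U) {k g : α → ℝ}
    (hk : MemLp k (ENNReal.ofReal q) (μ.restrict S))
    (hg : MemLp g (ENNReal.ofReal p) (μ.restrict U)) :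
    ‖∫ s in S, k s * g s ∂μ‖
      ≤ (∫ s in S, ‖k s‖ ^ q ∂μ) ^ (1 / q) * (∫ s in U, ‖g s‖ ^ p ∂μ) ^ (1 / p) := by
  calc ‖∫ s in S, k s * g s ∂μ‖ ≤ ∫ s in S, ‖k s‖ * ‖g s‖ ∂μ := by
        simpa only [norm_mul] using norm_integral_le_integral_norm (fun s => k s * g s)
    _ ≤ (∫ s in S, ‖k s‖ ^ q ∂μ) ^ (1 / q)
          * (∫ s in S, ‖g s‖ ^ p ∂μ) ^ (1 / p) :=
        integral_mul_norm_le_Lp_mul_Lq hpq.symm hk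
          (hg.mono_measure (Measure.restrict_mono hSU le_rfl))
    _ ≤ _ := by
        gcongr
        · exact one_div_nonneg.2 hpq.nonneg
        · exact .of_forall fun s => by positivity
        · simpa [ENNReal.toReal_ofReal hpq.nonneg] using
            hg.integrable_norm_rpow (by simpa using hpq.pos) ENNReal.ofReal_ne_top

lemma continuousOn_of_dist_le_mul_rpow {E : Type*} [PseudoMetricSpace E] {f : ℝ → E}
    {s : Set ℝ} {C e : ℝ} (he : 0 < e)
    (h : ∀ x ∈ s, ∀ y ∈ s, x ≤ y → dist (f x) (f y) ≤ C * (y - x) ^ e) :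
    ContinuousOn f s := by
  refine HolderOnWith.continuousOn (C := C.toNNReal) (r := e.toNNReal) (fun x hx y hy => ?_)
    (by simpa using he)
  wlog hxy : x ≤ y generalizing x y
  · rw [edist_comm, edist_comm x]
    exact this y hy x hx (le_of_not_ge hxy)
  rw [edist_dist, edist_dist, Real.dist_eq, abs_sub_comm, abs_of_nonneg (sub_nonneg.2 hxy),
    Real.coe_toNNReal _ he.le, ENNReal.ofReal_rpow_of_nonneg (sub_nonneg.2 hxy) he.le]
  change _ ≤ ENNReal.ofReal C * _
  rw [← ENNReal.ofReal_mul' (by positivity)]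
  exact ENNReal.ofReal_le_ofReal (h x hx y hy hxy)

section FractionalIntegral

variable {β p q T : ℝ} {g : ℝ → ℝ}

lemma intervalIntegrable_sub_rpow_mul (hpq : p.HolderConjugate q) (hβq : -1 < β * q)
    (hg : MemLp g (ENNReal.ofReal p) (volume.restrict (Icc 0 T)))
    {a b c : ℝ} (ha : 0 ≤ a) (hab : a ≤ b) (hbT : b ≤ T) (hbc : b ≤ c) :
    IntervalIntegrable (fun s => (c - s) ^ β * g s) volume a b := by
  rw [intervalIntegrable_iff_integrableOn_Ioc_of_le hab]
  have := hpq.symm.ennrealOfReal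
  exact (memLp_sub_rpow hpq.symm.pos hβq hbc).integrable_mul (hg.mono_measure
    (Measure.restrict_mono (Ioc_subset_Icc_self.trans (Icc_subset_Icc ha hbT)) le_rfl))

lemma dist_integral_sub_rpow_mul_le (hβ : β ≤ 0) (hpq : p.HolderConjugate q)
    (hσ : 0 < β * q + 1) (hg : MemLp g (ENNReal.ofReal p) (volume.restrict (Icc 0 T)))
    {a b : ℝ} (ha : 0 ≤ a) (hab : a ≤ b) (hbT : b ≤ T) :
    dist (∫ s in 0..a, (a - s) ^ β * g s) (∫ s in 0..b, (b - s) ^ β * g s)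
      ≤ 2 * ((b - a) ^ (β * q + 1) / (β * q + 1)) ^ (1 / q)
        * (∫ s in Icc 0 T, ‖g s‖ ^ p) ^ (1 / p) := by
  have hq : 1 ≤ q := hpq.symm.lt.le
  have hβq : -1 < β * q := by linarith
  have hsplit : (∫ s in 0..b, (b - s) ^ β * g s) - ∫ s in 0..a, (a - s) ^ β * g s
      = (∫ s in 0..a, ((b - s) ^ β - (a - s) ^ β) * g s)
        + ∫ s in a..b, (b - s) ^ β * g s := by
    rw [← integral_add_adjacent_intervals
        (intervalIntegrable_sub_rpow_mul hpq hβq hg le_rfl ha (hab.trans hbT) hab)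
        (intervalIntegrable_sub_rpow_mul hpq hβq hg ha hab hbT le_rfl)]
    simp_rw [sub_mul]
    rw [integral_sub (intervalIntegrable_sub_rpow_mul hpq hβq hg le_rfl ha (hab.trans hbT) hab)
      (intervalIntegrable_sub_rpow_mul hpq hβq hg le_rfl ha (hab.trans hbT) le_rfl)]
    ring
  have hpiece : ∀ {S : Set ℝ} {k : ℝ → ℝ}, S ⊆ Icc 0 T →
      MemLp k (ENNReal.ofReal q) (volume.restrict S) →
      ∫ s in S, ‖k s‖ ^ q ≤ (b - a) ^ (β * q + 1) / (β * q + 1) →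
      ‖∫ s in S, k s * g s‖ ≤ ((b - a) ^ (β * q + 1) / (β * q + 1)) ^ (1 / q)
        * (∫ s in Icc 0 T, ‖g s‖ ^ p) ^ (1 / p) := fun hS hk hkq =>
    (norm_setIntegral_mul_le hpq hS hk hg).trans (by gcongr)
  have hold := hpiece (k := fun s => (b - s) ^ β - (a - s) ^ β)
    (Ioc_subset_Icc_self.trans (Icc_subset_Icc le_rfl (hab.trans hbT)))
    ((memLp_sub_rpow hpq.symm.pos hβq hab).sub (memLp_sub_rpow hpq.symm.pos hβq le_rfl))
    (setIntegral_Ioc_norm_sub_rpow_sub_le hβ hq hσ ha hab)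
  have hnew := hpiece (Ioc_subset_Icc_self.trans (Icc_subset_Icc ha hbT))
    (memLp_sub_rpow hpq.symm.pos hβq le_rfl) (setIntegral_Ioc_norm_sub_rpow_rpow hσ hab).le
  rw [← integral_of_le ha] at hold
  rw [← integral_of_le hab] at hnew
  rw [dist_comm, dist_eq_norm, hsplit]
  linarith [norm_add_le (∫ s in 0..a, ((b - s) ^ β - (a - s) ^ β) * g s)
    (∫ s in a..b, (b - s) ^ β * g s)]

lemma continuousOn_integral_sub_rpow_mul (hβ : β ≤ 0) (hpq : p.HolderConjugate q)
    (hσ : 0 < β * q + 1) (hg : MemLp g (ENNReal.ofReal p) (volume.restrict (Icc 0 T))) :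
    ContinuousOn (fun t => ∫ s in 0..t, (t - s) ^ β * g s) (Icc 0 T) := by
  refine continuousOn_of_dist_le_mul_rpow
    (C := 2 * (β * q + 1)⁻¹ ^ (1 / q) * (∫ s in Icc 0 T, ‖g s‖ ^ p) ^ (1 / p))
    (div_pos hσ hpq.symm.pos) fun a ha b hb hab => ?_
  refine (dist_integral_sub_rpow_mul_le hβ hpq hσ hg ha.1 hab hb.2).trans_eq ?_
  rw [div_eq_inv_mul, mul_rpow (by positivity) (rpow_nonneg (sub_nonneg.2 hab) _),
    ← rpow_mul (sub_nonneg.2 hab), mul_one_div]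
  ring

end FractionalIntegral

theorem continuousOn_rlInt {α p T : ℝ} (hα : α ∈ Ioc 0 1) (hp : 1 / α < p) {g : ℝ → ℝ}
    (hg : MemLp g (ENNReal.ofReal p) (volume.restrict (Icc 0 T))) :
    ContinuousOn (rlInt α g) (Icc 0 T) := by
  have hp1 : 1 < p := (one_le_one_div hα.1 hα.2).trans_lt hp
  have hσ : 0 < (α - 1) * p.conjExponent + 1 := by
    have : 1 < α * p := by rwa [div_lt_iff₀ hα.1, mul_comm] at hp
    rw [Real.conjExponent, mul_div_assoc', div_add_one (by linarith)]
    apply div_pos <;> linarith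
  exact continuousOn_const.mul <| continuousOn_integral_sub_rpow_mul (by linarith [hα.2])
    (Real.HolderConjugate.conjExponent hp1) hσ hg

open TopologicalSpace in
lemma aestronglyMeasurable_comp_of_ae_continuous {α E F : Type*} [MeasurableSpace α]
    {μ : Measure α} [TopologicalSpace E] [MetrizableSpace E] [SecondCountableTopology E]
    [MeasurableSpace E] [OpensMeasurableSpace E] [TopologicalSpace F] [PseudoMetrizableSpace F]
    [SecondCountableTopology F] [MeasurableSpace F] [BorelSpace F] [Zero F] {f : E → α → F}
    (hcont : ∀ᵐ t ∂μ, Continuous fun x => f x t) (hmeas : ∀ x, Measurable (f x))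
    {ψ : α → E} (hψ : AEMeasurable ψ μ) :
    AEStronglyMeasurable (fun t => f (ψ t) t) μ := by
  classical
  obtain ⟨N, hNsub, hNmeas, hN0⟩ := exists_measurable_superset_of_null (ae_iff.1 hcont)
  let f' : E → α → F := fun x t => if t ∈ N then 0 else f x t
  have hcont' : ∀ t, Continuous fun x => f' x t := fun t => by
    by_cases ht : t ∈ N
    · simpa [f', ht] using continuous_const
    · simpa [f', ht] using not_not.1 (mt (@hNsub t) ht)
  have hjoint : Measurable (Function.uncurry f') :=
    measurable_uncurry_of_continuous_of_measurable hcont'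
      fun x => Measurable.ite hNmeas measurable_const (hmeas x)
  refine (hjoint.comp (hψ.measurable_mk.prodMk measurable_id)).aestronglyMeasurable.congr ?_
  filter_upwards [hψ.ae_eq_mk, measure_eq_zero_iff_ae_notMem.1 hN0] with t hψt htN
  simp [f', htN, hψt]

lemma memLp_comp_of_norm_le_mul_add {α E F : Type*} [MeasurableSpace α] {μ : Measure α}
    [IsFiniteMeasure μ] [NormedAddCommGroup E] [NormedAddCommGroup F] {p : ENNReal}
    {f : E → α → F} {γ : α → ℝ} {C M : ℝ} (hC : 0 ≤ C) (hγ : MemLp γ p μ)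
    (hgrowth : ∀ᵐ t ∂μ, ∀ x, ‖f x t‖ ≤ C * ‖x‖ + γ t) {ψ : α → E}
    (hψ : ∀ᵐ t ∂μ, ‖ψ t‖ ≤ M)
    (hmeas : AEStronglyMeasurable (fun t => f (ψ t) t) μ) :
    MemLp (fun t => f (ψ t) t) p μ := by
  refine ((memLp_const (C * M)).add hγ).mono' hmeas ?_
  filter_upwards [hgrowth, hψ] with t hft hψt
  exact (hft (ψ t)).trans (by simp only [Pi.add_apply]; gcongr)

theorem caraOp_maps_continuous_into_continuous_general
    (n : ℕ) (T : ℝ)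
    (α : Fin n → ℝ) (hα : ∀ j, α j ∈ Ioc (0:ℝ) 1)
    (p : ℝ) (hp : ∀ j, 1 / α j < p)
    (f : EuclideanSpace ℝ (Fin n) → ℝ → EuclideanSpace ℝ (Fin n))
    (hf : IsLpCaratheodory p T f) (ξ : EuclideanSpace ℝ (Fin n))
    (φ : ℝ → EuclideanSpace ℝ (Fin n)) (hφ : ContinuousOn φ (Icc 0 T)) :
    (∀ j, ContinuousOn
      (fun t => ξ j + (Real.Gamma (α j))⁻¹ * ∫ s in (0:ℝ)..t, (t - s) ^ (α j - 1) * f (φ s) s j)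
      (Icc (0:ℝ) T)) ∧
    ContinuousOn (caraOp α f ξ φ) (Icc (0:ℝ) T) := by
  obtain ⟨⟨hcont, hmeas⟩, ⟨C, hC, γ, hγ, hgrowth⟩, -⟩ := hf
  obtain ⟨M, hM⟩ := isCompact_Icc.exists_bound_of_continuousOn hφ
  have hF : MemLp (fun s => f (φ s) s) (ENNReal.ofReal p) (volume.restrict (Icc 0 T)) :=
    memLp_comp_of_norm_le_mul_add hC.le hγ hgrowth (ae_restrict_of_forall_mem measurableSet_Icc hM)
      (aestronglyMeasurable_comp_of_ae_continuous hcont hmeas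
        (hφ.aestronglyMeasurable measurableSet_Icc).aemeasurable)
  have hJ : ∀ j, ContinuousOn (rlInt (α j) fun s => f (φ s) s j) (Icc 0 T) := fun j =>
    continuousOn_rlInt (hα j) (hp j)
      (hF.continuousLinearMap_comp (EuclideanSpace.proj (𝕜 := ℝ) j))
  exact ⟨fun j => continuousOn_const.add (hJ j),
    continuousOn_const.add ((PiLp.continuous_toLp 2 _).comp_continuousOn (continuousOn_pi.2 hJ))⟩

/-- For an `L^p`-Carathéodory `f` with `p > max 1/α_j`, each component
`t ↦ ξ_j + J^{α_j} f_j(φ(·),·)(t)` is continuous on `[0,T]`; hence the operator `𝒯`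
maps `C([0,T];ℝⁿ)` into itself. -/
theorem caraOp_maps_continuous_into_continuous
    (n : ℕ) (hn : 1 ≤ n) (T : ℝ) (hT : 0 < T)
    (α : Fin n → ℝ) (hα : ∀ j, α j ∈ Ioc (0:ℝ) 1)
    (p : ℝ) (hp : ∀ j, 1 / α j < p)
    (f : EuclideanSpace ℝ (Fin n) → ℝ → EuclideanSpace ℝ (Fin n))
    (hf : IsLpCaratheodory p T f) (ξ : EuclideanSpace ℝ (Fin n))
    (φ : ℝ → EuclideanSpace ℝ (Fin n)) (hφ : ContinuousOn φ (Icc 0 T)) :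
    (∀ j, ContinuousOn
      (fun t => ξ j + (Real.Gamma (α j))⁻¹ * ∫ s in (0:ℝ)..t, (t - s) ^ (α j - 1) * f (φ s) s j)
      (Icc (0:ℝ) T)) ∧
    ContinuousOn (caraOp α f ξ φ) (Icc (0:ℝ) T) :=
  caraOp_maps_continuous_into_continuous_general n T α hα p hp f hf ξ φ hφ
end

section
/- Let n ≥ 1, T > 0, α₁, …, αₙ ∈ (0,1], p > max{1/α_j : j ∈ {1,…,n}}, let f = (f₁,…,fₙ) : ℝⁿ × [0,T] → ℝⁿ be an L^p-Carathéodory function with Lipschitz function ℓ ∈ L^p(0,T), and ξ ∈ ℝⁿ. Set α₀ := min{α_j}, M := Σ_{j=1}^n T^{α_j − α₀} Γ(α₀)/Γ(α_j), define T(φ)(t) := ξ + (J^{α_1} f₁(φ(·),·)(t), …, J^{α_n} f_n(φ(·),·)(t)), and define F₁(t) := J^{α₀}(Mℓ)(t) and F_{k+1}(t) := J^{α₀}(Mℓ · F_k)(t) for k ≥ 1. Then for every k ∈ ℕ, all continuous φ, ψ : [0,T] → ℝⁿ and all t ∈ [0,T], ‖T^k(φ)(t) − T^k(ψ)(t)‖_{ℝⁿ}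 ≤ ‖φ − ψ‖_{C([0,T];ℝⁿ)} · F_k(t), where T^k denotes the k-fold composition of T. -/
/-
Induction on `k`. If `‖Φ - Ψ‖ ≤ G` on `[0, T]`, the Lipschitz bound gives coordinatewise
`|(𝒯Φ - 𝒯Ψ)_j(t)| ≤ J^{α_j}(ℓ G)(t)`, and `(t - s)^(α_j - 1) ≤ T^(α_j - α₀) (t - s)^(α₀ - 1)`
turns this into `T^(α_j - α₀) Γ(α₀)/Γ(α_j) · J^{α₀}(ℓ G)(t)`; summing over `j` (using
`‖v‖ ≤ Σ |v_j|`) gives `‖𝒯Φ - 𝒯Ψ‖ ≤ J^{α₀}(M ℓ G)`, which with `G = ‖φ - ψ‖_∞ F_k` is the step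
from `k` to `k + 1`.

Since a non-integrable function has integral `0` in Lean, the bounds must be integrable: by
Hölder, `α₀ p > 1` makes `(t - s)^(α₀ - 1) ℓ(s)` integrable with integral bounded uniformly in
`t`, so every `F_k` is bounded and measurable; the iterates `𝒯^k φ` are measurable because `f`
is Carathéodory.
-/

open MeasureTheory Real Set

section RiemannLiouville

variable {E : Type*} [NormedAddCommGroup E] [NormedSpace ℝ E]

lemma rlInt_const_mul (ρ c : ℝ) (g : ℝ → ℝ) (t : ℝ) :
    rlInt ρ (fun s => c * g s) t = c * rlInt ρ g t := by
  simp only [rlInt, smul_eq_mul, mul_left_comm _ c, intervalIntegral.integral_const_mul]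

lemma rlInt_nonneg {ρ t : ℝ} (hρ : 0 < ρ) (ht : 0 ≤ t) {g : ℝ → ℝ}
    (hg : ∀ᵐ s ∂volume.restrict (Ioc 0 t), 0 ≤ g s) : 0 ≤ rlInt ρ g t := by
  rw [rlInt, intervalIntegral.integral_of_le ht, smul_eq_mul]
  refine mul_nonneg (inv_nonneg.2 (Gamma_pos_of_pos hρ).le) (integral_nonneg_of_ae ?_)
  filter_upwards [hg, ae_restrict_mem measurableSet_Ioc] with s hgs hs
  exact mul_nonneg (rpow_nonneg (sub_nonneg.2 hs.2) _) hgs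

lemma norm_rlInt_le {ρ t : ℝ} (hρ : 0 < ρ) (ht : 0 ≤ t) {A : ℝ → E} {g : ℝ → ℝ}
    (hg : IntegrableOn (fun s => (t - s) ^ (ρ - 1) * g s) (Ioc 0 t))
    (hA : ∀ᵐ s ∂volume.restrict (Ioc 0 t), ‖A s‖ ≤ g s) :
    ‖rlInt ρ A t‖ ≤ rlInt ρ g t := by
  have hΓ : 0 ≤ (Gamma ρ)⁻¹ := inv_nonneg.2 (Gamma_pos_of_pos hρ).le
  rw [rlInt, rlInt, norm_smul, Real.norm_of_nonneg hΓ, smul_eq_mul]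
  refine mul_le_mul_of_nonneg_left (intervalIntegral.norm_integral_le_of_norm_le ht ?_
    ((intervalIntegrable_iff_integrableOn_Ioc_of_le ht).2 hg)) hΓ
  rw [← ae_restrict_iff' measurableSet_Ioc]
  filter_upwards [hA, ae_restrict_mem measurableSet_Ioc] with s hAs hs
  rw [norm_smul, Real.norm_of_nonneg (rpow_nonneg (sub_nonneg.2 hs.2) _)]
  exact mul_le_mul_of_nonneg_left hAs (rpow_nonneg (sub_nonneg.2 hs.2) _)

lemma norm_rlInt_sub_le {ρ t : ℝ} (hρ : 0 < ρ) (ht : 0 ≤ t) {A B : ℝ → E} {g : ℝ → ℝ}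
    (hA : AEStronglyMeasurable A (volume.restrict (Ioc 0 t)))
    (hB : AEStronglyMeasurable B (volume.restrict (Ioc 0 t)))
    (hg : IntegrableOn (fun s => (t - s) ^ (ρ - 1) * g s) (Ioc 0 t))
    (hAB : ∀ᵐ s ∂volume.restrict (Ioc 0 t), ‖A s - B s‖ ≤ g s) :
    ‖rlInt ρ A t - rlInt ρ B t‖ ≤ rlInt ρ g t := by
  have hker : Measurable fun s : ℝ => (t - s) ^ (ρ - 1) := by fun_prop
  have hII : ∀ {C : ℝ → E}, IntervalIntegrable (fun s => (t - s) ^ (ρ - 1) • C s) volume 0 t ↔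
      IntegrableOn (fun s => (t - s) ^ (ρ - 1) • C s) (Ioc 0 t) :=
    intervalIntegrable_iff_integrableOn_Ioc_of_le ht
  have hsub : IntegrableOn (fun s => (t - s) ^ (ρ - 1) • (A s - B s)) (Ioc 0 t) := by
    refine hg.mono' (hker.aestronglyMeasurable.smul (hA.sub hB)) ?_
    filter_upwards [hAB, ae_restrict_mem measurableSet_Ioc] with s hABs hs
    rw [norm_smul, Real.norm_of_nonneg (rpow_nonneg (sub_nonneg.2 hs.2) _)]
    exact mul_le_mul_of_nonneg_left hABs (rpow_nonneg (sub_nonneg.2 hs.2) _)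
  by_cases hIA : IntegrableOn (fun s => (t - s) ^ (ρ - 1) • A s) (Ioc 0 t)
  · have hIB : IntegrableOn (fun s => (t - s) ^ (ρ - 1) • B s) (Ioc 0 t) :=
      (hIA.sub hsub).congr_fun (fun s _ => by simp [smul_sub]) measurableSet_Ioc
    have hsplit : rlInt ρ A t - rlInt ρ B t = rlInt ρ (fun s => A s - B s) t := by
      rw [rlInt, rlInt, rlInt, ← smul_sub, ← intervalIntegral.integral_sub (hII.2 hIA) (hII.2 hIB)]
      simp only [smul_sub]
    exact hsplit ▸ norm_rlInt_le hρ ht hg hAB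
  · have hIB : ¬IntegrableOn (fun s => (t - s) ^ (ρ - 1) • B s) (Ioc 0 t) := fun hIB =>
      hIA ((hIB.add hsub).congr_fun (fun s _ => by simp [smul_sub]) measurableSet_Ioc)
    rw [rlInt, rlInt, intervalIntegral.integral_undef (mt hII.1 hIA),
      intervalIntegral.integral_undef (mt hII.1 hIB), sub_self, norm_zero]
    exact rlInt_nonneg hρ ht (hAB.mono fun s hs => (norm_nonneg _).trans hs)

end RiemannLiouville

lemma rpow_sub_one_le_mul_rpow_sub_one {x T ρ₀ ρ : ℝ} (hx : 0 < x) (hxT : x ≤ T) (h : ρ₀ ≤ ρ) :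
    x ^ (ρ - 1) ≤ T ^ (ρ - ρ₀) * x ^ (ρ₀ - 1) := by
  calc x ^ (ρ - 1) = x ^ (ρ - ρ₀) * x ^ (ρ₀ - 1) := by rw [← rpow_add hx]; ring_nf
    _ ≤ T ^ (ρ - ρ₀) * x ^ (ρ₀ - 1) :=
      mul_le_mul_of_nonneg_right (rpow_le_rpow hx.le hxT (sub_nonneg.2 h)) (rpow_nonneg hx.le _)

section KernelComparison

variable {ρ₀ ρ t T : ℝ} {g : ℝ → ℝ}

lemma ae_rpow_sub_mul_le (hρ : ρ₀ ≤ ρ) (htT : t ≤ T)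
    (hg : ∀ᵐ s ∂volume.restrict (Ioc 0 t), 0 ≤ g s) :
    ∀ᵐ s ∂volume.restrict (Ioc 0 t),
      (t - s) ^ (ρ - 1) * g s ≤ T ^ (ρ - ρ₀) * ((t - s) ^ (ρ₀ - 1) * g s) := by
  -- Work on `Ioo 0 t`: at `s = t` the comparison fails (`0 ^ 0 = 1` when `ρ = 1 > ρ₀`).
  rw [← Measure.restrict_congr_set Ioo_ae_eq_Ioc] at hg ⊢
  filter_upwards [hg, ae_restrict_mem measurableSet_Ioo] with s hgs hs
  rw [← mul_assoc]
  exact mul_le_mul_of_nonneg_right (rpow_sub_one_le_mul_rpow_sub_one (sub_pos.2 hs.2)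
    (by linarith [hs.1]) hρ) hgs

lemma integrableOn_rpow_sub_mul_of_le (hρ : ρ₀ ≤ ρ) (htT : t ≤ T)
    (hgm : AEStronglyMeasurable g (volume.restrict (Ioc 0 t)))
    (hg0 : ∀ᵐ s ∂volume.restrict (Ioc 0 t), 0 ≤ g s)
    (hg : IntegrableOn (fun s => (t - s) ^ (ρ₀ - 1) * g s) (Ioc 0 t)) :
    IntegrableOn (fun s => (t - s) ^ (ρ - 1) * g s) (Ioc 0 t) := by
  refine (hg.const_mul (T ^ (ρ - ρ₀))).mono'
    ((by fun_prop : Measurable fun s : ℝ => (t - s) ^ (ρ - 1)).aestronglyMeasurable.mul hgm) ?_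
  filter_upwards [ae_rpow_sub_mul_le hρ htT hg0, hg0, ae_restrict_mem measurableSet_Ioc]
    with s hs hgs hst
  rwa [Real.norm_of_nonneg (mul_nonneg (rpow_nonneg (sub_nonneg.2 hst.2) _) hgs)]

lemma rlInt_le_mul_rlInt (hρ₀ : 0 < ρ₀) (hρ : ρ₀ ≤ ρ) (ht : 0 ≤ t) (htT : t ≤ T)
    (hgm : AEStronglyMeasurable g (volume.restrict (Ioc 0 t)))
    (hg0 : ∀ᵐ s ∂volume.restrict (Ioc 0 t), 0 ≤ g s)
    (hg : IntegrableOn (fun s => (t - s) ^ (ρ₀ - 1) * g s) (Ioc 0 t)) :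
    rlInt ρ g t ≤ T ^ (ρ - ρ₀) * Gamma ρ₀ / Gamma ρ * rlInt ρ₀ g t := by
  have hΓ₀ := Gamma_pos_of_pos hρ₀
  have hΓ := Gamma_pos_of_pos (hρ₀.trans_le hρ)
  have hint : ∫ s in Ioc 0 t, (t - s) ^ (ρ - 1) * g s
      ≤ T ^ (ρ - ρ₀) * ∫ s in Ioc 0 t, (t - s) ^ (ρ₀ - 1) * g s := by
    rw [← integral_const_mul]
    exact integral_mono_ae (integrableOn_rpow_sub_mul_of_le hρ htT hgm hg0 hg) (hg.const_mul _)
      (ae_rpow_sub_mul_le hρ htT hg0)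
  simp only [rlInt, smul_eq_mul, intervalIntegral.integral_of_le ht]
  calc (Gamma ρ)⁻¹ * ∫ s in Ioc 0 t, (t - s) ^ (ρ - 1) * g s
      ≤ (Gamma ρ)⁻¹ * (T ^ (ρ - ρ₀) * ∫ s in Ioc 0 t, (t - s) ^ (ρ₀ - 1) * g s) :=
        mul_le_mul_of_nonneg_left hint (inv_nonneg.2 hΓ.le)
    _ = T ^ (ρ - ρ₀) * Gamma ρ₀ / Gamma ρ *
        ((Gamma ρ₀)⁻¹ * ∫ s in Ioc 0 t, (t - s) ^ (ρ₀ - 1) * g s) := by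
        field_simp

end KernelComparison

lemma AEStronglyMeasurable.rlInt {E : Type*} [NormedAddCommGroup E] [NormedSpace ℝ E]
    {ρ T : ℝ} {h : ℝ → E} (hh : AEStronglyMeasurable h (volume.restrict (Icc 0 T))) :
    AEStronglyMeasurable (rlInt ρ h) (volume.restrict (Icc 0 T)) := by
  -- Fubini: `rlInt ρ h t` is, up to `Γ(ρ)⁻¹`, the `ν`-integral of a jointly measurable kernel.
  set ν := volume.restrict (Ioc (0:ℝ) T)
  set F : ℝ × ℝ → E := {q : ℝ × ℝ | 0 < q.2 ∧ q.2 ≤ q.1}.indicator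
      (fun q => (q.1 - q.2) ^ (ρ - 1) • h q.2)
  have hF : AEStronglyMeasurable F ((volume.restrict (Icc 0 T)).prod ν) := by
    refine AEStronglyMeasurable.indicator ?_
      ((measurableSet_lt measurable_const measurable_snd).inter
        (measurableSet_le measurable_snd measurable_fst))
    have hker : Measurable fun q : ℝ × ℝ => (q.1 - q.2) ^ (ρ - 1) := by fun_prop
    exact hker.aestronglyMeasurable.smul
      ((hh.mono_measure (Measure.restrict_mono Ioc_subset_Icc_self le_rfl))
        |>.comp_quasiMeasurePreserving Measure.quasiMeasurePreserving_snd)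
  refine (hF.integral_prod_right'.const_smul (Gamma ρ)⁻¹).congr ?_
  filter_upwards [ae_restrict_mem measurableSet_Icc] with t ht
  have hslice : (fun s => F (t, s)) = (Ioc 0 t).indicator (fun s => (t - s) ^ (ρ - 1) • h s) := by
    ext s; simp only [F, indicator_apply, mem_Ioc]; rfl
  simp only [Pi.smul_apply, _root_.rlInt, hslice, intervalIntegral.integral_of_le ht.1,
    integral_indicator measurableSet_Ioc, ν, Measure.restrict_restrict measurableSet_Ioc,
    inter_eq_self_of_subset_left (Ioc_subset_Ioc_right ht.2)]

section Holder

variable {t : ℝ}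

lemma integrableOn_rpow_sub {r : ℝ} (hr : -1 < r) (ht : 0 ≤ t) :
    IntegrableOn (fun s => (t - s) ^ r) (Ioc 0 t) := by
  rw [← intervalIntegrable_iff_integrableOn_Ioc_of_le ht]
  simpa using
    ((intervalIntegral.intervalIntegrable_rpow' (a := 0) (b := t) hr).comp_sub_left t).symm

lemma integral_rpow_sub {r : ℝ} (hr : -1 < r) (ht : 0 ≤ t) :
    ∫ s in Ioc 0 t, (t - s) ^ r = t ^ (r + 1) / (r + 1) := by
  rw [← intervalIntegral.integral_of_le ht,
    intervalIntegral.integral_comp_sub_left (fun x : ℝ => x ^ r) t, sub_self, sub_zero,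
    integral_rpow (Or.inl hr), zero_rpow (by linarith), sub_zero]

lemma integral_rpow_sub_rpow {q r : ℝ} (hr : -1 < r * q) (ht : 0 ≤ t) :
    ∫ s in Ioc 0 t, ((t - s) ^ r) ^ q = t ^ (r * q + 1) / (r * q + 1) := by
  rw [← integral_rpow_sub hr ht]
  exact setIntegral_congr_fun measurableSet_Ioc fun s hs => by rw [← rpow_mul (sub_nonneg.2 hs.2)]

lemma memLp_rpow_sub {q r : ℝ} (hq : 0 < q) (hr : -1 < r * q) (ht : 0 ≤ t) :
    MemLp (fun s => (t - s) ^ r) (ENNReal.ofReal q) (volume.restrict (Ioc 0 t)) := by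
  have hker : Measurable fun s : ℝ => (t - s) ^ r := by fun_prop
  refine (integrable_norm_rpow_iff hker.aestronglyMeasurable (by simpa using hq)
    ENNReal.ofReal_ne_top).1 ?_
  refine (integrableOn_rpow_sub hr ht).congr_fun (fun s hs => ?_) measurableSet_Ioc
  have hts : 0 ≤ t - s := sub_nonneg.2 hs.2
  rw [Real.norm_of_nonneg (rpow_nonneg hts _), ENNReal.toReal_ofReal hq.le, ← rpow_mul hts]

/-- Hölder's inequality: the kernel `(t - s)^(ρ-1)` lies in `L^q`, `q` the conjugate exponent,
exactly when `ρ p > 1`. -/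
lemma exists_forall_integral_rpow_sub_mul_abs_le {p ρ T : ℝ} (hρ : 0 < ρ) (hρ1 : ρ ≤ 1)
    (hpρ : 1 / ρ < p)
    {g : ℝ → ℝ} (hg : MemLp g (ENNReal.ofReal p) (volume.restrict (Icc 0 T))) :
    ∃ K, ∀ t ∈ Icc 0 T, IntegrableOn (fun s => (t - s) ^ (ρ - 1) * g s) (Ioc 0 t) ∧
      ∫ s in Ioc 0 t, (t - s) ^ (ρ - 1) * |g s| ≤ K := by
  have hρp : 1 < ρ * p := by rwa [div_lt_iff₀ hρ, mul_comm] at hpρ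
  have hp : 1 < p := by nlinarith
  set q := p.conjExponent
  have hpq : p.HolderConjugate q := .conjExponent hp
  have hr : -1 < (ρ - 1) * q := by
    rw [show q = p / (p - 1) from rfl, mul_div_assoc', lt_div_iff₀ (by linarith)]
    linarith
  refine ⟨(∫ s in Icc 0 T, |g s| ^ p) ^ (1 / p) *
    (T ^ ((ρ - 1) * q + 1) / ((ρ - 1) * q + 1)) ^ (1 / q), fun t ht => ?_⟩
  have hsub : Ioc 0 t ⊆ Icc 0 T := fun s hs => ⟨hs.1.le, hs.2.trans ht.2⟩
  have hgt : MemLp g (ENNReal.ofReal p) (volume.restrict (Ioc 0 t)) := hg.mono_measure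
    (Measure.restrict_mono hsub le_rfl)
  have hker := memLp_rpow_sub hpq.symm.pos hr ht.1
  have hgp : IntegrableOn (fun s => |g s| ^ p) (Icc 0 T) := by
    show Integrable _ _
    simpa [ENNReal.toReal_ofReal hpq.nonneg] using
      hg.integrable_norm_rpow (by simpa using hpq.pos) ENNReal.ofReal_ne_top
  have := hpq.ennrealOfReal
  refine ⟨hker.integrable_mul hgt, ?_⟩
  calc ∫ s in Ioc 0 t, (t - s) ^ (ρ - 1) * |g s| = ∫ s in Ioc 0 t, |g s| * (t - s) ^ (ρ - 1) := by
        simp only [mul_comm]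
    _ ≤ (∫ s in Ioc 0 t, |g s| ^ p) ^ (1 / p) *
        (∫ s in Ioc 0 t, ((t - s) ^ (ρ - 1)) ^ q) ^ (1 / q) :=
        integral_mul_le_Lp_mul_Lq_of_nonneg hpq (.of_forall fun s => abs_nonneg _)
          ((ae_restrict_iff' measurableSet_Ioc).2 (.of_forall fun s hs =>
            rpow_nonneg (sub_nonneg.2 hs.2) _))
          (by simpa only [Real.norm_eq_abs] using hgt.norm) hker
    _ ≤ _ := by
        have hm : 0 < (ρ - 1) * q + 1 := by linarith
        have hgT : ∫ s in Ioc 0 t, |g s| ^ p ≤ ∫ s in Icc 0 T, |g s| ^ p :=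
          setIntegral_mono_set hgp (.of_forall fun s => by positivity) hsub.eventuallyLE
        have htT : t ^ ((ρ - 1) * q + 1) / ((ρ - 1) * q + 1) ≤
            T ^ ((ρ - 1) * q + 1) / ((ρ - 1) * q + 1) :=
          div_le_div_of_nonneg_right (rpow_le_rpow ht.1 ht.2 hm.le) hm.le
        have ht0 : 0 ≤ t ^ ((ρ - 1) * q + 1) / ((ρ - 1) * q + 1) :=
          div_nonneg (rpow_nonneg ht.1 _) hm.le
        rw [integral_rpow_sub_rpow hr ht.1]
        exact mul_le_mul (rpow_le_rpow (integral_nonneg fun s => by positivity) hgT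
          hpq.one_div_nonneg) (rpow_le_rpow ht0 htT hpq.symm.one_div_nonneg)
          (rpow_nonneg ht0 _) (rpow_nonneg (integral_nonneg fun s => by positivity) _)

end Holder

section BoundedMultiplier

variable {p ρ T C : ℝ} {g h : ℝ → ℝ}

lemma integrableOn_rpow_sub_mul_mul (hρ : 0 < ρ) (hρ1 : ρ ≤ 1) (hpρ : 1 / ρ < p)
    (hg : MemLp g (ENNReal.ofReal p) (volume.restrict (Icc 0 T)))
    (hh : AEStronglyMeasurable h (volume.restrict (Icc 0 T))) (hC : ∀ s ∈ Icc 0 T, |h s| ≤ C)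
    {t : ℝ} (ht : t ∈ Icc 0 T) :
    IntegrableOn (fun s => (t - s) ^ (ρ - 1) * (g s * h s)) (Ioc 0 t) := by
  obtain ⟨K, hK⟩ := exists_forall_integral_rpow_sub_mul_abs_le hρ hρ1 hpρ hg
  have hsub : Ioc 0 t ⊆ Icc 0 T := fun s hs => ⟨hs.1.le, hs.2.trans ht.2⟩
  simp_rw [← mul_assoc]
  exact (hK t ht).1.mul_bdd (hh.mono_measure (Measure.restrict_mono hsub le_rfl))
    ((ae_restrict_iff' measurableSet_Ioc).2 (.of_forall fun s hs => hC s (hsub hs)))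

lemma exists_forall_abs_rlInt_mul_le (hρ : 0 < ρ) (hρ1 : ρ ≤ 1) (hpρ : 1 / ρ < p)
    (hg : MemLp g (ENNReal.ofReal p) (volume.restrict (Icc 0 T)))
    (hC : ∀ s ∈ Icc 0 T, |h s| ≤ C) :
    ∃ C', ∀ t ∈ Icc 0 T, |rlInt ρ (fun s => g s * h s) t| ≤ C' := by
  obtain ⟨K, hK⟩ := exists_forall_integral_rpow_sub_mul_abs_le hρ hρ1 hpρ hg
  refine ⟨C * ((Gamma ρ)⁻¹ * K), fun t ht => ?_⟩
  have hC0 : 0 ≤ C := (abs_nonneg _).trans (hC t ht)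
  have hbound : ∀ᵐ s ∂volume.restrict (Ioc 0 t), ‖g s * h s‖ ≤ C * |g s| := by
    refine (ae_restrict_iff' measurableSet_Ioc).2 (.of_forall fun s hs => ?_)
    rw [norm_mul, Real.norm_eq_abs, Real.norm_eq_abs, mul_comm]
    exact mul_le_mul_of_nonneg_right (hC s ⟨hs.1.le, hs.2.trans ht.2⟩) (abs_nonneg _)
  have hint : IntegrableOn (fun s => (t - s) ^ (ρ - 1) * (C * |g s|)) (Ioc 0 t) := by
    refine IntegrableOn.congr_fun ((hK t ht).1.norm.const_mul C) (fun s hs => ?_) measurableSet_Ioc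
    rw [norm_mul, Real.norm_eq_abs, Real.norm_eq_abs,
      abs_of_nonneg (rpow_nonneg (sub_nonneg.2 hs.2) _), mul_left_comm]
  calc |rlInt ρ (fun s => g s * h s) t| ≤ rlInt ρ (fun s => C * |g s|) t :=
        norm_rlInt_le hρ ht.1 hint hbound
    _ = C * ((Gamma ρ)⁻¹ * ∫ s in Ioc 0 t, (t - s) ^ (ρ - 1) * |g s|) := by
        rw [rlInt_const_mul, rlInt, smul_eq_mul, intervalIntegral.integral_of_le ht.1]
        rfl
    _ ≤ C * ((Gamma ρ)⁻¹ * K) := by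
        gcongr
        exact (hK t ht).2

end BoundedMultiplier

lemma iterJ_aestronglyMeasurable_and_bounded {p ρ T : ℝ} (hρ : 0 < ρ) (hρ1 : ρ ≤ 1)
    (hpρ : 1 / ρ < p) {g : ℝ → ℝ} (hg : MemLp g (ENNReal.ofReal p) (volume.restrict (Icc 0 T)))
    (k : ℕ) :
    AEStronglyMeasurable (iterJ ρ g k) (volume.restrict (Icc 0 T)) ∧
      ∃ C, ∀ t ∈ Icc 0 T, |iterJ ρ g k t| ≤ C := by
  induction k with
  | zero => exact ⟨aestronglyMeasurable_const, 1, fun _ _ => by simp [iterJ]⟩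
  | succ k ih =>
    obtain ⟨hm, C, hC⟩ := ih
    exact ⟨AEStronglyMeasurable.rlInt (hg.1.mul hm),
      exists_forall_abs_rlInt_mul_le hρ hρ1 hpρ hg hC⟩

lemma aestronglyMeasurable_comp_of_caratheodory {X E F : Type*} [MeasurableSpace X]
    {μ : Measure X} [TopologicalSpace E] [TopologicalSpace F]
    [TopologicalSpace.PseudoMetrizableSpace F] [MeasurableSpace F] [BorelSpace F]
    [SecondCountableTopology F] {f : E → X → F}
    (hcont : ∀ᵐ t ∂μ, Continuous fun x => f x t) (hmeas : ∀ x, Measurable fun t => f x t)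
    {φ : X → E} (hφ : AEStronglyMeasurable φ μ) :
    AEStronglyMeasurable (fun t => f (φ t) t) μ := by
  obtain ⟨φ', hφ'm, hφφ'⟩ := hφ
  -- Approximate `φ'` by simple functions, along which `f` is measurable in `t`.
  have hφ' : AEStronglyMeasurable (fun t => f (φ' t) t) μ :=
    aestronglyMeasurable_of_tendsto_ae (u := Filter.atTop)
      (f := fun m t => f (hφ'm.approx m t) t)
      (fun m => (SimpleFunc.measurable_bind (hφ'm.approx m) (fun x t => f x t)
        hmeas).aestronglyMeasurable)
      (by filter_upwards [hcont] with t ht using (ht.tendsto _).comp (hφ'm.tendsto_approx t))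
  exact hφ'.congr (hφφ'.mono fun t ht => by simp only [ht])

lemma EuclideanSpace.norm_le_sum_norm {ι 𝕜 : Type*} [Fintype ι] [RCLike 𝕜]
    (x : EuclideanSpace 𝕜 ι) : ‖x‖ ≤ ∑ i, ‖x i‖ := by
  rw [EuclideanSpace.norm_eq]
  exact Real.sqrt_le_iff.2 ⟨by positivity,
    Finset.sum_sq_le_sq_sum_of_nonneg fun i _ => norm_nonneg _⟩

lemma nonneg_of_forall_norm_sub_le {E F : Type*} [NormedAddCommGroup E] [Nontrivial E]
    [SeminormedAddCommGroup F] {g : E → F} {c : ℝ} (h : ∀ x y, ‖g x - g y‖ ≤ c * ‖x - y‖) :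
    0 ≤ c := by
  obtain ⟨x, hx⟩ := exists_ne (0 : E)
  exact nonneg_of_mul_nonneg_left ((norm_nonneg _).trans (h x 0)) (by simpa using hx)

lemma le_ciSup_of_continuousOn {X : Type*} [TopologicalSpace X] {K : Set X} (hK : IsCompact K)
    {g : X → ℝ} (hg : ContinuousOn g K) {x : X} (hx : x ∈ K) : g x ≤ ⨆ y : K, g y :=
  have : CompactSpace K := isCompact_iff_compactSpace.1 hK
  le_ciSup (f := fun y : K => g y) (isCompact_range hg.domRestrict).bddAbove ⟨x, hx⟩

section CaraOp

variable {n : ℕ} {T : ℝ} {α : Fin n → ℝ}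
  {f : EuclideanSpace ℝ (Fin n) → ℝ → EuclideanSpace ℝ (Fin n)} (ξ : EuclideanSpace ℝ (Fin n))

lemma caraOp_sub_apply (φ ψ : ℝ → EuclideanSpace ℝ (Fin n)) (t : ℝ) (j : Fin n) :
    (caraOp α f ξ φ t - caraOp α f ξ ψ t) j =
      rlInt (α j) (fun s => f (φ s) s j) t - rlInt (α j) (fun s => f (ψ s) s j) t := by
  simp [caraOp]

lemma aestronglyMeasurable_caraOp (hcar : IsCaratheodory T f) {φ : ℝ → EuclideanSpace ℝ (Fin n)}
    (hφ : AEStronglyMeasurable φ (volume.restrict (Icc 0 T))) :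
    AEStronglyMeasurable (caraOp α f ξ φ) (volume.restrict (Icc 0 T)) := by
  have hfφ := aestronglyMeasurable_comp_of_caratheodory hcar.1 hcar.2 hφ
  refine aestronglyMeasurable_const.add ((PiLp.continuous_toLp 2 _).measurable.comp_aemeasurable
    (aemeasurable_pi_lambda _ fun j => ?_)).aestronglyMeasurable
  exact (AEStronglyMeasurable.rlInt
    ((EuclideanSpace.proj j).continuous.comp_aestronglyMeasurable hfφ)).aemeasurable

lemma aestronglyMeasurable_iterate_caraOp (hcar : IsCaratheodory T f)
    {φ : ℝ → EuclideanSpace ℝ (Fin n)} (hφ : AEStronglyMeasurable φ (volume.restrict (Icc 0 T)))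
    (k : ℕ) : AEStronglyMeasurable ((caraOp α f ξ)^[k] φ) (volume.restrict (Icc 0 T)) := by
  induction k with
  | zero => exact hφ
  | succ k ih =>
    rw [Function.iterate_succ_apply']
    exact aestronglyMeasurable_caraOp ξ hcar ih

end CaraOp

theorem norm_caraOp_sub_le {n : ℕ} {T : ℝ} {α : Fin n → ℝ} {α₀ M : ℝ} (hα₀ : 0 < α₀)
    (hα₀le : ∀ j, α₀ ≤ α j) (hM : M = ∑ j, T ^ (α j - α₀) * Gamma α₀ / Gamma (α j))
    {f : EuclideanSpace ℝ (Fin n) → ℝ → EuclideanSpace ℝ (Fin n)} (hcar : IsCaratheodory T f)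
    {ℓ : ℝ → ℝ} (hℓm : AEStronglyMeasurable ℓ (volume.restrict (Icc 0 T)))
    (hℓ0 : ∀ᵐ s ∂volume.restrict (Icc 0 T), 0 ≤ ℓ s)
    (hlip : ∀ᵐ s ∂volume.restrict (Icc 0 T), ∀ x y, ‖f x s - f y s‖ ≤ ℓ s * ‖x - y‖)
    (ξ : EuclideanSpace ℝ (Fin n)) {Φ Ψ : ℝ → EuclideanSpace ℝ (Fin n)}
    (hΦ : AEStronglyMeasurable Φ (volume.restrict (Icc 0 T)))
    (hΨ : AEStronglyMeasurable Ψ (volume.restrict (Icc 0 T)))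
    {G : ℝ → ℝ} (hG : AEStronglyMeasurable G (volume.restrict (Icc 0 T)))
    (hΦΨ : ∀ s ∈ Icc 0 T, ‖Φ s - Ψ s‖ ≤ G s) {t : ℝ} (ht : t ∈ Icc 0 T)
    (hint : IntegrableOn (fun s => (t - s) ^ (α₀ - 1) * (ℓ s * G s)) (Ioc 0 t)) :
    ‖caraOp α f ξ Φ t - caraOp α f ξ Ψ t‖ ≤ M * rlInt α₀ (fun s => ℓ s * G s) t := by
  have hsub : Ioc 0 t ⊆ Icc 0 T := fun s hs => ⟨hs.1.le, hs.2.trans ht.2⟩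
  have hle : volume.restrict (Ioc 0 t) ≤ volume.restrict (Icc 0 T) :=
    Measure.restrict_mono hsub le_rfl
  have hgm : AEStronglyMeasurable (fun s => ℓ s * G s) (volume.restrict (Ioc 0 t)) :=
    (hℓm.mul hG).mono_measure hle
  have hg0 : ∀ᵐ s ∂volume.restrict (Ioc 0 t), 0 ≤ ℓ s * G s := by
    filter_upwards [ae_mono hle hℓ0, ae_restrict_mem measurableSet_Ioc] with s hℓs hs
    exact mul_nonneg hℓs ((norm_nonneg _).trans (hΦΨ s (hsub hs)))
  have hcomp : ∀ {φ : ℝ → EuclideanSpace ℝ (Fin n)},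
      AEStronglyMeasurable φ (volume.restrict (Icc 0 T)) → ∀ j,
      AEStronglyMeasurable (fun s => f (φ s) s j) (volume.restrict (Ioc 0 t)) := fun hφ j =>
    ((EuclideanSpace.proj j).continuous.comp_aestronglyMeasurable
      (aestronglyMeasurable_comp_of_caratheodory hcar.1 hcar.2 hφ)).mono_measure hle
  have hcoord : ∀ j, ‖(caraOp α f ξ Φ t - caraOp α f ξ Ψ t) j‖ ≤
      rlInt (α j) (fun s => ℓ s * G s) t := fun j => by
    rw [caraOp_sub_apply]
    refine norm_rlInt_sub_le (hα₀.trans_le (hα₀le j)) ht.1 (hcomp hΦ j) (hcomp hΨ j)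
      (integrableOn_rpow_sub_mul_of_le (hα₀le j) ht.2 hgm hg0 hint) ?_
    filter_upwards [ae_mono hle hlip, ae_mono hle hℓ0, ae_restrict_mem measurableSet_Ioc]
      with s hlips hℓs hs
    calc ‖f (Φ s) s j - f (Ψ s) s j‖ ≤ ‖f (Φ s) s - f (Ψ s) s‖ := by
          simpa using PiLp.norm_apply_le (f (Φ s) s - f (Ψ s) s) j
      _ ≤ ℓ s * ‖Φ s - Ψ s‖ := hlips _ _
      _ ≤ ℓ s * G s := mul_le_mul_of_nonneg_left (hΦΨ s (hsub hs)) hℓs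
  calc ‖caraOp α f ξ Φ t - caraOp α f ξ Ψ t‖
      ≤ ∑ j, ‖(caraOp α f ξ Φ t - caraOp α f ξ Ψ t) j‖ := EuclideanSpace.norm_le_sum_norm _
    _ ≤ ∑ j, T ^ (α j - α₀) * Gamma α₀ / Gamma (α j) * rlInt α₀ (fun s => ℓ s * G s) t :=
        Finset.sum_le_sum fun j _ => (hcoord j).trans
          (rlInt_le_mul_rlInt hα₀ (hα₀le j) ht.1 ht.2 hgm hg0 hint)
    _ = M * rlInt α₀ (fun s => ℓ s * G s) t := by rw [hM, Finset.sum_mul]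

theorem norm_caraOp_sub_le_mul_iterJ_succ {n : ℕ} {T p : ℝ} {α : Fin n → ℝ} {α₀ M : ℝ}
    (hα₀ : 0 < α₀) (hα₀1 : α₀ ≤ 1) (hpα₀ : 1 / α₀ < p) (hα₀le : ∀ j, α₀ ≤ α j)
    (hM : M = ∑ j, T ^ (α j - α₀) * Gamma α₀ / Gamma (α j))
    {f : EuclideanSpace ℝ (Fin n) → ℝ → EuclideanSpace ℝ (Fin n)} (hcar : IsCaratheodory T f)
    {ℓ : ℝ → ℝ} (hℓ : MemLp ℓ (ENNReal.ofReal p) (volume.restrict (Icc 0 T)))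
    (hℓ0 : ∀ᵐ s ∂volume.restrict (Icc 0 T), 0 ≤ ℓ s)
    (hlip : ∀ᵐ s ∂volume.restrict (Icc 0 T), ∀ x y, ‖f x s - f y s‖ ≤ ℓ s * ‖x - y‖)
    (ξ : EuclideanSpace ℝ (Fin n)) {Φ Ψ : ℝ → EuclideanSpace ℝ (Fin n)}
    (hΦ : AEStronglyMeasurable Φ (volume.restrict (Icc 0 T)))
    (hΨ : AEStronglyMeasurable Ψ (volume.restrict (Icc 0 T))) {D : ℝ} {k : ℕ}
    (hΦΨ : ∀ s ∈ Icc 0 T, ‖Φ s - Ψ s‖ ≤ D * iterJ α₀ (fun s => M * ℓ s) k s)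
    {t : ℝ} (ht : t ∈ Icc 0 T) :
    ‖caraOp α f ξ Φ t - caraOp α f ξ Ψ t‖ ≤ D * iterJ α₀ (fun s => M * ℓ s) (k + 1) t := by
  set F := iterJ α₀ (fun s => M * ℓ s) k
  obtain ⟨hFm, C, hC⟩ :=
    iterJ_aestronglyMeasurable_and_bounded hα₀ hα₀1 hpα₀ (hℓ.const_mul M) k
  have hDF : ∀ s ∈ Icc 0 T, |D * F s| ≤ |D| * C := fun s hs => by
    rw [abs_mul]; gcongr; exact hC s hs
  calc _ ≤ M * rlInt α₀ (fun s => ℓ s * (D * F s)) t :=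
        norm_caraOp_sub_le hα₀ hα₀le hM hcar hℓ.1 hℓ0 hlip ξ hΦ hΨ (hFm.const_mul D) hΦΨ ht
          (integrableOn_rpow_sub_mul_mul hα₀ hα₀1 hpα₀ hℓ (hFm.const_mul D) hDF ht)
    _ = D * iterJ α₀ (fun s => M * ℓ s) (k + 1) t := by
        simp only [iterJ, F, ← rlInt_const_mul]
        congr 1; ext s; ring

theorem caraOp_iterate_estimate_general
    (n : ℕ) (hn : 1 ≤ n) (T : ℝ)
    (α : Fin n → ℝ) (hα : ∀ j, α j ∈ Ioc (0:ℝ) 1)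
    (p : ℝ) (hp : ∀ j, 1 / α j < p)
    (f : EuclideanSpace ℝ (Fin n) → ℝ → EuclideanSpace ℝ (Fin n))
    (hcar : IsCaratheodory T f)
    (ℓ : ℝ → ℝ) (hℓ : MemLp ℓ (ENNReal.ofReal p) (volume.restrict (Icc (0:ℝ) T)))
    (hlip : ∀ᵐ t ∂(volume.restrict (Icc (0:ℝ) T)), ∀ x y, ‖f x t - f y t‖ ≤ ℓ t * ‖x - y‖)
    (ξ : EuclideanSpace ℝ (Fin n))
    (α₀ M : ℝ) (hα₀ : α₀ = ⨅ j, α j)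
    (hM : M = ∑ j, T ^ (α j - α₀) * Real.Gamma α₀ / Real.Gamma (α j)) :
    ∀ k : ℕ, ∀ φ ψ : ℝ → EuclideanSpace ℝ (Fin n),
      ContinuousOn φ (Icc 0 T) → ContinuousOn ψ (Icc 0 T) →
      ∀ t ∈ Icc (0:ℝ) T,
        ‖(caraOp α f ξ)^[k] φ t - (caraOp α f ξ)^[k] ψ t‖ ≤
          (⨆ s : Icc (0:ℝ) T, ‖φ s - ψ s‖) * iterJ α₀ (fun s => M * ℓ s) k t := by
  have : Nonempty (Fin n) := ⟨⟨0, hn⟩⟩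
  obtain ⟨j₀, hj₀⟩ := exists_eq_ciInf_of_finite (f := α)
  rw [← hα₀] at hj₀
  have hα₀le : ∀ j, α₀ ≤ α j := fun j => hα₀ ▸ ciInf_le (Finite.bddBelow_range α) j
  obtain ⟨hα₀pos, hα₀1⟩ : α₀ ∈ Ioc 0 1 := hj₀ ▸ hα j₀
  have hpα₀ : 1 / α₀ < p := hj₀ ▸ hp j₀
  have hℓ0 : ∀ᵐ s ∂volume.restrict (Icc 0 T), 0 ≤ ℓ s :=
    hlip.mono fun s hs => nonneg_of_forall_norm_sub_le hs
  intro k φ ψ hφ hψ t ht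
  induction k generalizing t with
  | zero =>
    simpa [iterJ] using le_ciSup_of_continuousOn isCompact_Icc (hφ.sub hψ).norm ht
  | succ k ih =>
    rw [Function.iterate_succ_apply', Function.iterate_succ_apply']
    exact norm_caraOp_sub_le_mul_iterJ_succ hα₀pos hα₀1 hpα₀ hα₀le hM hcar hℓ hℓ0 hlip ξ
      (aestronglyMeasurable_iterate_caraOp ξ hcar (hφ.aestronglyMeasurable measurableSet_Icc) k)
      (aestronglyMeasurable_iterate_caraOp ξ hcar (hψ.aestronglyMeasurable measurableSet_Icc) k)
      ih ht

/-- Iterated contraction estimate: with `α₀ = min α_j`, `M = Σ_j T^(α_j-α₀) Γ(α₀)/Γ(α_j)`,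
`F_k` the `k`-th iterated Riemann–Liouville integral built from `M ℓ`, one has
`‖𝒯^k(φ)(t) - 𝒯^k(ψ)(t)‖ ≤ ‖φ - ψ‖_{C([0,T];ℝⁿ)} F_k(t)`. -/
theorem caraOp_iterate_estimate
    (n : ℕ) (hn : 1 ≤ n) (T : ℝ) (hT : 0 < T)
    (α : Fin n → ℝ) (hα : ∀ j, α j ∈ Ioc (0:ℝ) 1)
    (p : ℝ) (hp : ∀ j, 1 / α j < p)
    (f : EuclideanSpace ℝ (Fin n) → ℝ → EuclideanSpace ℝ (Fin n))
    (hcar : IsCaratheodory T f)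
    (hgrowth : ∃ C > (0:ℝ), ∃ γ : ℝ → ℝ,
      MemLp γ (ENNReal.ofReal p) (volume.restrict (Icc (0:ℝ) T)) ∧
      ∀ᵐ t ∂(volume.restrict (Icc (0:ℝ) T)), ∀ x, ‖f x t‖ ≤ C * ‖x‖ + γ t)
    (ℓ : ℝ → ℝ) (hℓ : MemLp ℓ (ENNReal.ofReal p) (volume.restrict (Icc (0:ℝ) T)))
    (hlip : ∀ᵐ t ∂(volume.restrict (Icc (0:ℝ) T)), ∀ x y, ‖f x t - f y t‖ ≤ ℓ t * ‖x - y‖)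
    (ξ : EuclideanSpace ℝ (Fin n))
    (α₀ M : ℝ) (hα₀ : α₀ = ⨅ j, α j)
    (hM : M = ∑ j, T ^ (α j - α₀) * Real.Gamma α₀ / Real.Gamma (α j)) :
    ∀ k : ℕ, ∀ φ ψ : ℝ → EuclideanSpace ℝ (Fin n),
      ContinuousOn φ (Icc 0 T) → ContinuousOn ψ (Icc 0 T) →
      ∀ t ∈ Icc (0:ℝ) T,
        ‖(caraOp α f ξ)^[k] φ t - (caraOp α f ξ)^[k] ψ t‖ ≤
          (⨆ s : Icc (0:ℝ) T, ‖φ s - ψ s‖) * iterJ α₀ (fun s => M * ℓ s) k t :=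
  caraOp_iterate_estimate_general n hn T α hα p hp f hcar ℓ hℓ hlip ξ α₀ M hα₀ hM
end

section
/- Let T > 0, p ∈ (1,∞), and let σ ∈ L^p(0,T;ℝ) be such that the (a.e. defined) function t ↦ J^{1/p}σ(t) is essentially unbounded on [0,T], i.e., for every M > 0 the set {t ∈ [0,T] : |J^{1/p}σ(t)| > M} has positive Lebesgue measure. Then there is no continuous function φ : [0,T] → ℝ satisfying J^{1−1/p}(φ − φ(0))(t) = ∫₀ᵗ (φ(s) + σ(s)) ds for all t ∈ [0,T]; that is, the Caputo problem ᶜD^{1/p}_t φ(t) = φ(t) + σ(t) a.e. on [0,T] admits no continuous solution. -/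
open MeasureTheory Real Set

/-!
Put `α = 1/p`. Applying `J^α` to `J^{1-α}(φ - φ 0) = J^1 (φ + σ)` and using the semigroup law
`J^a J^b = J^{a+b}` (Fubini plus the Beta integral; valid pointwise for `L¹` data when
`a + b ≥ 1`) gives `J^1 (φ - φ 0) = J^1 J^α (φ + σ)` on `[0,T]`, so `φ - φ 0 = J^α φ + J^α σ`
almost everywhere by Lebesgue differentiation. A continuous `φ` is bounded on `[0,T]`, hence so
is `J^α φ`, and therefore `J^α σ` is essentially bounded there.
-/

theorem integral_one_sub_rpow_mul_rpow {a b : ℝ} (ha : 0 < a) (hb : 0 < b) :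
    ∫ u in (0:ℝ)..1, (1 - u) ^ (a - 1) * u ^ (b - 1) = Gamma a * Gamma b / Gamma (a + b) := by
  have h := Complex.betaIntegral_eq_Gamma_mul_div (b : ℂ) (a : ℂ) (by simpa) (by simpa)
  rw [Complex.betaIntegral, add_comm, ← Complex.ofReal_add, Complex.Gamma_ofReal,
    Complex.Gamma_ofReal, Complex.Gamma_ofReal] at h
  apply Complex.ofReal_injective
  push_cast
  rw [mul_comm, ← h, ← intervalIntegral.integral_ofReal]
  refine intervalIntegral.integral_congr fun u hu => ?_
  rw [uIcc_of_le zero_le_one] at hu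
  push_cast
  rw [Complex.ofReal_cpow (by linarith [hu.2]), Complex.ofReal_cpow hu.1, mul_comm]
  push_cast
  ring_nf

theorem integral_sub_rpow_mul_sub_rpow {a b r t : ℝ} (ha : 0 < a) (hb : 0 < b) (hrt : r < t) :
    ∫ s in r..t, (t - s) ^ (a - 1) * (s - r) ^ (b - 1)
      = Gamma a * Gamma b / Gamma (a + b) * (t - r) ^ (a + b - 1) := by
  have htr : 0 < t - r := sub_pos.2 hrt
  have hsub := intervalIntegral.smul_integral_comp_mul_add (a := 0) (b := 1)
    (fun s => (t - s) ^ (a - 1) * (s - r) ^ (b - 1)) (t - r) r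
  simp only [mul_zero, zero_add, mul_one, sub_add_cancel, smul_eq_mul] at hsub
  rw [← hsub, ← integral_one_sub_rpow_mul_rpow ha hb, ← intervalIntegral.integral_mul_const,
    ← intervalIntegral.integral_const_mul]
  refine intervalIntegral.integral_congr fun u hu => ?_
  rw [uIcc_of_le zero_le_one] at hu
  have e1 : t - ((t - r) * u + r) = (t - r) * (1 - u) := by ring
  have e2 : (t - r) * u + r - r = (t - r) * u := by ring
  simp only [e1, e2]
  rw [Real.mul_rpow htr.le (by linarith [hu.2]), Real.mul_rpow htr.le hu.1,
    show a + b - 1 = (a - 1) + (b - 1) + 1 by ring, Real.rpow_add_one htr.ne',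
    Real.rpow_add htr]
  ring

theorem intervalIntegrable_sub_rpow_mul_sub_rpow {a b r t : ℝ} (ha : 0 < a) (hb : 0 < b)
    (hrt : r < t) :
    IntervalIntegrable (fun s => (t - s) ^ (a - 1) * (s - r) ^ (b - 1)) volume r t := by
  -- a nonzero integral forces integrability
  refine intervalIntegral.intervalIntegrable_of_integral_ne_zero ?_
  rw [integral_sub_rpow_mul_sub_rpow ha hb hrt]
  have := Real.Gamma_pos_of_pos ha
  have := Real.Gamma_pos_of_pos hb
  have := Real.Gamma_pos_of_pos (add_pos ha hb)
  have := Real.rpow_pos_of_pos (sub_pos.2 hrt) (a + b - 1)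
  positivity

section RiemannLiouville

variable {E : Type*} [NormedAddCommGroup E] [NormedSpace ℝ E]

theorem rlInt_one (g : ℝ → E) (t : ℝ) : rlInt 1 g t = ∫ s in (0:ℝ)..t, g s := by
  simp [rlInt]

theorem rlInt_congr {a t : ℝ} {f f' : ℝ → E} (h : EqOn f f' (uIoc 0 t)) :
    rlInt a f t = rlInt a f' t := by
  unfold rlInt
  congr 1
  refine intervalIntegral.integral_congr_ae (Filter.Eventually.of_forall fun s hs => ?_)
  rw [h hs]

theorem rlInt_add {a t : ℝ} {f h : ℝ → E}
    (hf : IntervalIntegrable (fun s => (t - s) ^ (a - 1) • f s) volume 0 t)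
    (hh : IntervalIntegrable (fun s => (t - s) ^ (a - 1) • h s) volume 0 t) :
    rlInt a (fun s => f s + h s) t = rlInt a f t + rlInt a h t := by
  simp only [rlInt, smul_add, intervalIntegral.integral_add hf hh]

theorem norm_rlInt_le_s16 {a t C : ℝ} {f : ℝ → E} (ha : 0 < a) (ht : 0 ≤ t)
    (hf : ∀ s ∈ Ioc 0 t, ‖f s‖ ≤ C) :
    ‖rlInt a f t‖ ≤ C * t ^ a / Gamma (a + 1) := by
  obtain rfl | ht := ht.eq_or_lt
  · simp [rlInt, Real.zero_rpow ha.ne']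
  have hΓ := Real.Gamma_pos_of_pos ha
  have hker := integral_sub_rpow_mul_sub_rpow ha one_pos ht
  simp only [sub_self, Real.rpow_zero, mul_one, Real.Gamma_one, add_sub_cancel_right,
    sub_zero] at hker
  have hk := intervalIntegrable_sub_rpow_mul_sub_rpow ha one_pos ht
  simp only [sub_self, Real.rpow_zero, mul_one] at hk
  have hint : ‖∫ s in (0:ℝ)..t, (t - s) ^ (a - 1) • f s‖
      ≤ ∫ s in (0:ℝ)..t, (t - s) ^ (a - 1) * C := by
    refine intervalIntegral.norm_integral_le_of_norm_le ht.le
      (Filter.Eventually.of_forall fun s hs => ?_) (hk.mul_const C)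
    rw [norm_smul, Real.norm_of_nonneg (Real.rpow_nonneg (by linarith [hs.2]) _)]
    exact mul_le_mul_of_nonneg_left (hf s hs) (Real.rpow_nonneg (by linarith [hs.2]) _)
  calc ‖rlInt a f t‖ ≤ (Gamma a)⁻¹ * ∫ s in (0:ℝ)..t, (t - s) ^ (a - 1) * C := by
        rw [rlInt, norm_smul, Real.norm_of_nonneg (inv_nonneg.2 hΓ.le)]
        exact mul_le_mul_of_nonneg_left hint (inv_nonneg.2 hΓ.le)
    _ = C * t ^ a / Gamma (a + 1) := by
        rw [intervalIntegral.integral_mul_const, hker]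
        field_simp

end RiemannLiouville

/-- Its integral over `(0,t]²` in the variables `q = (s, r)` is `Γ a * Γ b * J^a (J^b g) t`. -/
noncomputable def iteratedRLIntegrand (a b t : ℝ) (g : ℝ → ℝ) (q : ℝ × ℝ) : ℝ :=
  if q.2 < q.1 then (t - q.1) ^ (a - 1) * ((q.1 - q.2) ^ (b - 1) * g q.2) else 0

section Fubini

variable {a b t : ℝ} {g : ℝ → ℝ}

theorem restrict_Ioc_restrict_Iio (μ : Measure ℝ) {c s : ℝ} (hs : s ≤ t) :
    (μ.restrict (Ioc c t)).restrict (Iio s) = μ.restrict (Ioo c s) := by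
  rw [Measure.restrict_restrict measurableSet_Iio]
  congr 1
  ext r
  simp only [mem_inter_iff, mem_Iio, mem_Ioc, mem_Ioo]
  constructor
  · rintro ⟨hrs, hcr, -⟩
    exact ⟨hcr, hrs⟩
  · rintro ⟨hcr, hrs⟩
    exact ⟨hrs, hcr, hrs.le.trans hs⟩

theorem restrict_Ioc_restrict_Ioi (μ : Measure ℝ) {c r : ℝ} (hr : c ≤ r) :
    (μ.restrict (Ioc c t)).restrict (Ioi r) = μ.restrict (Ioc r t) := by
  rw [Measure.restrict_restrict measurableSet_Ioi, inter_comm, Ioc_inter_Ioi, max_eq_right hr]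

theorem ae_restrict_Ioc_mem_Ioo (μ : Measure ℝ) [NullSingletonClass μ] (c : ℝ) :
    ∀ᵐ r ∂μ.restrict (Ioc c t), r ∈ Ioo c t := by
  rw [← Measure.restrict_congr_set Ioo_ae_eq_Ioc]
  exact ae_restrict_mem measurableSet_Ioo

theorem iteratedRLIntegrand_section_snd (s : ℝ) :
    (fun r => iteratedRLIntegrand a b t g (s, r))
      = (Iio s).indicator fun r => (t - s) ^ (a - 1) * ((s - r) ^ (b - 1) * g r) := by
  ext r
  simp [iteratedRLIntegrand, indicator_apply]

theorem iteratedRLIntegrand_section_fst (r : ℝ) :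
    (fun s => iteratedRLIntegrand a b t g (s, r))
      = (Ioi r).indicator fun s => (t - s) ^ (a - 1) * (s - r) ^ (b - 1) * g r := by
  ext s
  simp [iteratedRLIntegrand, indicator_apply, mul_assoc]

theorem integral_iteratedRLIntegrand_snd {s : ℝ} (hs : s ∈ Ioc 0 t) :
    ∫ r, iteratedRLIntegrand a b t g (s, r) ∂volume.restrict (Ioc 0 t)
      = (t - s) ^ (a - 1) * ∫ r in Ioc 0 s, (s - r) ^ (b - 1) * g r := by
  rw [iteratedRLIntegrand_section_snd, integral_indicator measurableSet_Iio,
    restrict_Ioc_restrict_Iio volume hs.2, ← integral_Ioc_eq_integral_Ioo, integral_const_mul]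

theorem integrable_iteratedRLIntegrand_fst (ha : 0 < a) (hb : 0 < b) {r : ℝ}
    (hr : r ∈ Ioo 0 t) :
    Integrable (fun s => iteratedRLIntegrand a b t g (s, r)) (volume.restrict (Ioc 0 t)) := by
  rw [iteratedRLIntegrand_section_fst, integrable_indicator_iff measurableSet_Ioi, IntegrableOn,
    restrict_Ioc_restrict_Ioi volume hr.1.le]
  exact ((intervalIntegrable_sub_rpow_mul_sub_rpow ha hb hr.2).mul_const _).1

theorem integral_iteratedRLIntegrand_fst (ha : 0 < a) (hb : 0 < b) {r : ℝ}
    (hr : r ∈ Ioo 0 t) :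
    ∫ s, iteratedRLIntegrand a b t g (s, r) ∂volume.restrict (Ioc 0 t)
      = Gamma a * Gamma b / Gamma (a + b) * (t - r) ^ (a + b - 1) * g r := by
  rw [iteratedRLIntegrand_section_fst, integral_indicator measurableSet_Ioi,
    restrict_Ioc_restrict_Ioi volume hr.1.le, integral_mul_const,
    ← intervalIntegral.integral_of_le hr.2.le, integral_sub_rpow_mul_sub_rpow ha hb hr.2]

theorem aestronglyMeasurable_iteratedRLIntegrand
    (hg : AEStronglyMeasurable g (volume.restrict (Ioc 0 t))) :
    AEStronglyMeasurable (iteratedRLIntegrand a b t g)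
      ((volume.restrict (Ioc 0 t)).prod (volume.restrict (Ioc 0 t))) := by
  have hker : Measurable fun q : ℝ × ℝ => (t - q.1) ^ (a - 1) * (q.1 - q.2) ^ (b - 1) := by
    fun_prop
  have h := (hker.aestronglyMeasurable.mul
    (hg.comp_snd (μ := volume.restrict (Ioc 0 t)))).indicator
      (measurableSet_lt measurable_snd measurable_fst)
  refine h.congr (Filter.Eventually.of_forall fun q => ?_)
  simp [iteratedRLIntegrand, indicator_apply, mul_assoc]

theorem integrable_iteratedRLIntegrand (ha : 0 < a) (hb : 0 < b) (hab : 1 ≤ a + b)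
    (hg : IntegrableOn g (Ioc 0 t)) :
    Integrable (iteratedRLIntegrand a b t g)
      ((volume.restrict (Ioc 0 t)).prod (volume.restrict (Ioc 0 t))) := by
  have hm := aestronglyMeasurable_iteratedRLIntegrand (a := a) (b := b) hg.aestronglyMeasurable
  refine (integrable_prod_iff' hm).2 ⟨?_, ?_⟩
  · filter_upwards [ae_restrict_Ioc_mem_Ioo volume 0] with r hr
    exact integrable_iteratedRLIntegrand_fst ha hb hr
  · set B := Gamma a * Gamma b / Gamma (a + b)
    have hB : 0 ≤ B := by
      have := Real.Gamma_pos_of_pos ha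
      have := Real.Gamma_pos_of_pos hb
      have := Real.Gamma_pos_of_pos (add_pos ha hb)
      positivity
    refine (hg.norm.const_mul (B * t ^ (a + b - 1))).mono'
      hm.norm.prod_swap.integral_prod_right' ?_
    filter_upwards [ae_restrict_Ioc_mem_Ioo volume 0] with r hr
    have hnorm : ∫ s, ‖iteratedRLIntegrand a b t g (s, r)‖ ∂volume.restrict (Ioc 0 t)
        = ∫ s, iteratedRLIntegrand a b t (fun x => |g x|) (s, r) ∂volume.restrict (Ioc 0 t) := by
      refine setIntegral_congr_fun measurableSet_Ioc fun s hs => ?_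
      simp only [iteratedRLIntegrand]
      split_ifs with hrs
      · rw [Real.norm_eq_abs, abs_mul, abs_mul,
          abs_of_nonneg (Real.rpow_nonneg (by linarith [hs.2]) _),
          abs_of_nonneg (Real.rpow_nonneg (by linarith) _)]
      · simp
    have hpow := Real.rpow_le_rpow (sub_pos.2 hr.2).le (by linarith [hr.1] : t - r ≤ t)
      (by linarith : 0 ≤ a + b - 1)
    rw [hnorm, integral_iteratedRLIntegrand_fst ha hb hr, Real.norm_eq_abs, Real.norm_eq_abs,
      abs_of_nonneg (by have := Real.rpow_nonneg (sub_pos.2 hr.2).le (a + b - 1); positivity)]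
    exact mul_le_mul_of_nonneg_right (mul_le_mul_of_nonneg_left hpow hB) (abs_nonneg _)

end Fubini

theorem rlInt_eq_integral_Ioc {a t : ℝ} (ht : 0 ≤ t) (f : ℝ → ℝ) :
    rlInt a f t = (Gamma a)⁻¹ * ∫ s in Ioc 0 t, (t - s) ^ (a - 1) * f s := by
  rw [rlInt, intervalIntegral.integral_of_le ht, smul_eq_mul]
  rfl

section Semigroup

variable {a b t : ℝ} {g : ℝ → ℝ}

theorem rlInt_rlInt (ha : 0 < a) (hb : 0 < b) (hab : 1 ≤ a + b) (ht : 0 ≤ t)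
    (hg : IntegrableOn g (Ioc 0 t)) :
    rlInt a (rlInt b g) t = rlInt (a + b) g t := by
  obtain rfl | ht := ht.eq_or_lt
  · simp [rlInt]
  have hint := integrable_iteratedRLIntegrand ha hb hab hg
  have hΓa := (Real.Gamma_pos_of_pos ha).ne'
  have hΓb := (Real.Gamma_pos_of_pos hb).ne'
  have hΓab := (Real.Gamma_pos_of_pos (add_pos ha hb)).ne'
  have key : ∫ s in Ioc 0 t, (t - s) ^ (a - 1) * rlInt b g s
      = (Gamma b)⁻¹ * (Gamma a * Gamma b / Gamma (a + b))
        * ∫ r in Ioc 0 t, (t - r) ^ (a + b - 1) * g r := calc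
    _ = (Gamma b)⁻¹ * ∫ s in Ioc 0 t, ∫ r in Ioc 0 t, iteratedRLIntegrand a b t g (s, r) := by
        rw [← integral_const_mul]
        refine setIntegral_congr_fun measurableSet_Ioc fun s hs => ?_
        rw [integral_iteratedRLIntegrand_snd hs, rlInt_eq_integral_Ioc hs.1.le]
        ring
    _ = (Gamma b)⁻¹ * ∫ r in Ioc 0 t, ∫ s in Ioc 0 t, iteratedRLIntegrand a b t g (s, r) := by
        rw [integral_integral_swap (f := fun s r => iteratedRLIntegrand a b t g (s, r)) hint]
    _ = _ := by
        rw [mul_assoc, ← integral_const_mul (Gamma a * Gamma b / Gamma (a + b))]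
        refine congrArg ((Gamma b)⁻¹ * ·) (integral_congr_ae ?_)
        filter_upwards [ae_restrict_Ioc_mem_Ioo volume 0] with r hr
        rw [integral_iteratedRLIntegrand_fst ha hb hr]
        ring
  rw [rlInt_eq_integral_Ioc ht.le, rlInt_eq_integral_Ioc ht.le, key]
  field_simp

theorem integrableOn_rlInt (hb : 0 < b) (hg : IntegrableOn g (Ioc 0 t)) :
    IntegrableOn (rlInt b g) (Ioc 0 t) := by
  have h := (integrable_iteratedRLIntegrand one_pos hb (by linarith) hg).integral_prod_left
  refine (h.const_mul (Gamma b)⁻¹).congr ?_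
  filter_upwards [ae_restrict_mem measurableSet_Ioc] with s hs
  rw [integral_iteratedRLIntegrand_snd hs, rlInt_eq_integral_Ioc hs.1.le, sub_self,
    Real.rpow_zero, one_mul]

theorem ae_intervalIntegrable_sub_rpow_mul (hb : 0 < b) (hg : IntegrableOn g (Ioc 0 t)) :
    ∀ᵐ s, s ∈ Icc 0 t → IntervalIntegrable (fun r => (s - r) ^ (b - 1) * g r) volume 0 s := by
  have h := (integrable_iteratedRLIntegrand one_pos hb (by linarith) hg).prod_right_ae
  rw [ae_restrict_iff' measurableSet_Ioc] at h
  filter_upwards [h] with s hs hst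
  obtain rfl | hs0 := hst.1.eq_or_lt
  · exact IntervalIntegrable.refl
  replace hst : s ∈ Ioc 0 t := ⟨hs0, hst.2⟩
  replace hs := hs hst
  rw [iteratedRLIntegrand_section_snd, integrable_indicator_iff measurableSet_Iio, IntegrableOn,
    restrict_Ioc_restrict_Iio volume hst.2] at hs
  simp only [sub_self, Real.rpow_zero, one_mul] at hs
  rw [intervalIntegrable_iff_integrableOn_Ioc_of_le hst.1.le,
    integrableOn_Ioc_iff_integrableOn_Ioo]
  exact hs

end Semigroup

theorem ae_rlInt_add {a t : ℝ} {f h : ℝ → ℝ} (ha : 0 < a) (hf : IntegrableOn f (Ioc 0 t))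
    (hh : IntegrableOn h (Ioc 0 t)) :
    ∀ᵐ s, s ∈ Icc 0 t → rlInt a (fun r => f r + h r) s = rlInt a f s + rlInt a h s := by
  filter_upwards [ae_intervalIntegrable_sub_rpow_mul ha hf,
    ae_intervalIntegrable_sub_rpow_mul ha hh] with s hfs hhs hs
  exact rlInt_add (hfs hs) (hhs hs)

theorem ae_eq_zero_of_forall_intervalIntegral_eq_zero {E : Type*} [NormedAddCommGroup E]
    [NormedSpace ℝ E] [CompleteSpace E] {f : ℝ → E} {a b : ℝ} (hf : IntegrableOn f (Ioc a b))
    (h : ∀ x ∈ Icc a b, ∫ t in a..x, f t = 0) :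
    ∀ᵐ x, x ∈ Icc a b → f x = 0 := by
  rcases lt_or_ge b a with hba | hab
  · exact Filter.Eventually.of_forall fun x hx => absurd (hx.1.trans hx.2) (not_le.2 hba)
  have hfi : IntervalIntegrable f volume a b :=
    (intervalIntegrable_iff_integrableOn_Ioc_of_le hab).2 hf
  have hne : ∀ c : ℝ, ∀ᵐ x : ℝ, x ≠ c := fun c => by simp [ae_iff, measure_singleton]
  filter_upwards [hfi.ae_hasDerivAt_integral, hne a, hne b] with x hx hxa hxb hmem
  have hIoo : x ∈ Ioo a b := ⟨hmem.1.lt_of_ne' hxa, hmem.2.lt_of_ne hxb⟩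
  rw [uIcc_of_le hab] at hx
  have hzero : (fun _ => (0 : E)) =ᶠ[nhds x] fun y => ∫ t in a..y, f t :=
    Filter.eventually_of_mem (isOpen_Ioo.mem_nhds hIoo) fun y hy =>
      (h y (Ioo_subset_Icc_self hy)).symm
  exact ((hx hmem a (left_mem_Icc.2 hab)).congr_of_eventuallyEq hzero).unique
    (hasDerivAt_const x 0)

theorem ae_eq_rlInt_of_rlInt_one_sub_eq_integral {α T : ℝ} {ψ g : ℝ → ℝ} (hα : 0 < α)
    (hα1 : α < 1) (hψ : IntegrableOn ψ (Ioc 0 T)) (hg : IntegrableOn g (Ioc 0 T))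
    (h : ∀ t ∈ Icc 0 T, rlInt (1 - α) ψ t = ∫ s in (0:ℝ)..t, g s) :
    ∀ᵐ t, t ∈ Icc 0 T → ψ t = rlInt α g t := by
  have hJg := integrableOn_rlInt hα hg
  have hprim : ∀ t ∈ Icc 0 T, ∫ s in (0:ℝ)..t, (ψ s - rlInt α g s) = 0 := by
    intro t ht
    have hsub : Ioc 0 t ⊆ Ioc 0 T := Ioc_subset_Ioc_right ht.2
    have hint : ∀ f : ℝ → ℝ, IntegrableOn f (Ioc 0 T) → IntervalIntegrable f volume 0 t :=
      fun f hf => (intervalIntegrable_iff_integrableOn_Ioc_of_le ht.1).2 (hf.mono_set hsub)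
    have hJ : rlInt 1 ψ t = rlInt 1 (rlInt α g) t := calc
      rlInt 1 ψ t = rlInt α (rlInt (1 - α) ψ) t := by
        rw [rlInt_rlInt hα (by linarith) (by linarith) ht.1 (hψ.mono_set hsub), add_sub_cancel]
      _ = rlInt α (rlInt 1 g) t := rlInt_congr fun s hs => by
        rw [uIoc_of_le ht.1] at hs
        rw [h s ⟨hs.1.le, hs.2.trans ht.2⟩, rlInt_one]
      _ = rlInt 1 (rlInt α g) t := by
        rw [rlInt_rlInt hα one_pos (by linarith) ht.1 (hg.mono_set hsub),
          rlInt_rlInt one_pos hα (by linarith) ht.1 (hg.mono_set hsub), add_comm]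
    rw [intervalIntegral.integral_sub (hint ψ hψ) (hint _ hJg), ← rlInt_one, ← rlInt_one, hJ,
      sub_self]
  filter_upwards [ae_eq_zero_of_forall_intervalIntegral_eq_zero (hψ.sub hJg) hprim]
    with t ht hmem
  exact sub_eq_zero.1 (ht hmem)

theorem no_continuous_solution_of_unbounded_rlInt_general
    (T p : ℝ) (hp : 1 < p)
    (σ : ℝ → ℝ)
    (hσ : MemLp σ (ENNReal.ofReal p) (volume.restrict (Icc (0:ℝ) T)))
    (hunb : ∀ M > (0:ℝ), 0 < volume {t ∈ Icc (0:ℝ) T | M < |rlInt (1 / p) σ t|}) :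
    ¬ ∃ φ : ℝ → ℝ, ContinuousOn φ (Icc (0:ℝ) T) ∧
      ∀ t ∈ Icc (0:ℝ) T,
        rlInt (1 - 1 / p) (fun s => φ s - φ 0) t = ∫ s in (0:ℝ)..t, (φ s + σ s) := by
  rintro ⟨φ, hφ, hsol⟩
  set α := 1 / p
  have hα : 0 < α := by positivity
  have hα1 : α < 1 := (div_lt_one (by linarith)).2 hp
  have hφi : IntegrableOn φ (Ioc 0 T) := hφ.integrableOn_Icc.mono_set Ioc_subset_Icc_self
  have hσi : IntegrableOn σ (Ioc 0 T) :=
    IntegrableOn.mono_set (hσ.integrable (ENNReal.one_le_ofReal.2 hp.le)) Ioc_subset_Icc_self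
  have hψi : IntegrableOn (fun s => φ s - φ 0) (Ioc 0 T) :=
    (hφ.sub continuousOn_const).integrableOn_Icc.mono_set Ioc_subset_Icc_self
  obtain ⟨C, hC⟩ := isCompact_Icc.exists_bound_of_continuousOn hφ
  set M := 2 * C + C * T ^ α / Gamma (α + 1)
  have hbound : ∀ᵐ t, t ∈ Icc 0 T → |rlInt α σ t| ≤ M := by
    filter_upwards [ae_eq_rlInt_of_rlInt_one_sub_eq_integral hα hα1 hψi (hφi.add hσi) hsol,
      ae_rlInt_add hα hφi hσi] with t hψ hadd ht
    have hC0 : 0 ≤ C := (norm_nonneg _).trans (hC t ht)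
    have hJφ := norm_rlInt_le_s16 hα ht.1 fun s hs => hC s ⟨hs.1.le, hs.2.trans ht.2⟩
    have hpow : t ^ α ≤ T ^ α := Real.rpow_le_rpow ht.1 ht.2 hα.le
    have hΓ := Real.Gamma_pos_of_pos (add_pos hα one_pos)
    have hφt := hC t ht
    have hφ0 := hC 0 ⟨le_rfl, ht.1.trans ht.2⟩
    rw [Real.norm_eq_abs] at hJφ hφt hφ0
    have hsplit : φ t - φ 0 = rlInt α φ t + rlInt α σ t := (hψ ht).trans (hadd ht)
    rw [show rlInt α σ t = φ t - φ 0 - rlInt α φ t by linarith]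
    have := abs_sub (φ t - φ 0) (rlInt α φ t)
    have := abs_sub (φ t) (φ 0)
    have : C * t ^ α / Gamma (α + 1) ≤ C * T ^ α / Gamma (α + 1) := by gcongr
    linarith
  refine (hunb (|M| + 1) (by positivity)).ne' (measure_eq_zero_iff_ae_notMem.2 ?_)
  filter_upwards [hbound] with t ht ⟨hmem, hlt⟩
  linarith [ht hmem, le_abs_self M]

/-- If `σ ∈ L^p(0,T)` is such that `J^{1/p} σ` is essentially unbounded on `[0,T]`, then the
Caputo problem `ᶜD^{1/p} φ = φ + σ` a.e. on `[0,T]` (formulated as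
`J^{1-1/p}(φ - φ(0))(t) = ∫₀ᵗ (φ(s) + σ(s)) ds`) has no continuous solution. -/
theorem no_continuous_solution_of_unbounded_rlInt
    (T p : ℝ) (hT : 0 < T) (hp : 1 < p)
    (σ : ℝ → ℝ)
    (hσ : MemLp σ (ENNReal.ofReal p) (volume.restrict (Icc (0:ℝ) T)))
    (hunb : ∀ M > (0:ℝ), 0 < volume {t ∈ Icc (0:ℝ) T | M < |rlInt (1 / p) σ t|}) :
    ¬ ∃ φ : ℝ → ℝ, ContinuousOn φ (Icc (0:ℝ) T) ∧
      ∀ t ∈ Icc (0:ℝ) T,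
        rlInt (1 - 1 / p) (fun s => φ s - φ 0) t = ∫ s in (0:ℝ)..t, (φ s + σ s) :=
  no_continuous_solution_of_unbounded_rlInt_general T p hp σ hσ hunb
end
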